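/- arXiv:1604.07451 — 6 statements merged into one kernel-verified Lean document; each statement's English description precedes it below -/
import Mathlib

section
/- Let X ∈ ℝ^{n×p} with rows x_i and let S = (1/n)XᵀX. For every lower-triangular p×p real matrix L, tr(S LᵀL) = (1/n)·Σ_{r=1}^p ‖X_{1:r}(L_{r,1:r})ᵀ‖₂², where X_{1:r} is the matrix of the first r columns of X and L_{r,1:r} is the row vector of the first r entries of row r of L. Consequently, for any λ ≥ 0 and weights w_{ℓm} > 0, the penalized objective −2Σ_{r=1}^p log L_{rr} + (1/n)Σ_{i=1}^n ‖L x_i‖₂² + λΣ_{r=2}^p P_r(L_{r·}) equals (−2 log L_{11} + (1/n)‖X_1 L_{11}‖₂²) + Σ_{r=2}^p F_r((L_{r,1:r})ᵀ); hence a lower-triangular L with positive diagonal minimizes the penalized objective if and only if for each r ≥ 2 the vector (L_{r,1:r})ᵀ minimizes the r-th row subproblem and, provided S_{11} > 0, L_{11} = 1/√(S_{11}). -/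
/-!
Because `L` is lower triangular, `(X Lᵀ)_{ir}` involves only the first `r + 1` entries of row `r`
of `L`, so the trace term, and with it the whole penalized objective, splits into a sum of row
terms `F_r(L_r)`; the first one is the first-row term, its penalty sum being empty. A sum of
functions of separate rows is minimized over a product of row constraint sets exactly when each
row is minimized separately, and `F_r` only sees the entries up to the diagonal, so the
triangularity constraint on a row can be dropped. The first row is the scalar problem
`min_{t > 0} -2 log t + S₁₁ t²`: with `v = S₁₁ t²` it reads `v - log v + log S₁₁`, and
`log v ≤ v - 1` with equality only at `v = 1` makes `t = 1/√S₁₁` its unique minimizer.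
-/

open Matrix Real Set

theorem isMinOn_iff_of_retraction {α β : Type*} [Preorder β] {f : α → β} {s t : Set α}
    {a : α}
    (hst : s ⊆ t) (g : α → α) (hg : MapsTo g t s) (hfg : ∀ b ∈ t, f (g b) = f b) :
    IsMinOn f s a ↔ IsMinOn f t a := by
  refine ⟨fun h => isMinOn_iff.2 fun b hb => ?_, fun h => h.on_subset hst⟩
  exact (hfg b hb) ▸ isMinOn_iff.1 h (g b) (hg hb)

theorem isMinOn_comp_preimage_iff {α β γ : Type*} [Preorder γ] {f : β → γ} {g : α → β}
    (hg : Function.Surjective g) {s : Set β} {a : α} :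
    IsMinOn (f ∘ g) (g ⁻¹' s) a ↔ IsMinOn f s (g a) := by
  refine ⟨fun h => isMinOn_iff.2 fun b hb => ?_, fun h => h.on_preimage g⟩
  obtain ⟨x, rfl⟩ := hg b
  exact isMinOn_iff.1 h x hb

theorem isMinOn_pi_sum_iff {ι : Type*} [Fintype ι] [DecidableEq ι] {α : ι → Type*}
    {f : ∀ i, α i → ℝ} {s : ∀ i, Set (α i)} {x : ∀ i, α i} (hx : x ∈ univ.pi s) :
    IsMinOn (fun y => ∑ i, f i (y i)) (univ.pi s) x ↔ ∀ i, IsMinOn (f i) (s i) (x i) := by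
  refine ⟨fun h i => isMinOn_iff.2 fun b hb => ?_, fun h => isMinOn_iff.2 fun y hy =>
    Finset.sum_le_sum fun i _ => isMinOn_iff.1 (h i) _ (hy i trivial)⟩
  have hupd : Function.update x i b ∈ univ.pi s := by
    intro j _
    rcases eq_or_ne j i with rfl | hj
    · simpa using hb
    · simpa [hj] using hx j trivial
  have hrest : ∑ j ∈ Finset.univ.erase i, f j (Function.update x i b j)
      = ∑ j ∈ Finset.univ.erase i, f j (x j) :=
    Finset.sum_congr rfl fun j hj => by rw [Function.update_of_ne (Finset.ne_of_mem_erase hj)]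
  have hle := isMinOn_iff.1 h _ hupd
  rw [← Finset.add_sum_erase _ _ (Finset.mem_univ i),
    ← Finset.add_sum_erase _ _ (Finset.mem_univ i), Function.update_self, hrest] at hle
  exact le_of_add_le_add_right hle

theorem mul_sq_eq_one_iff_eq_one_div_sqrt {c u : ℝ} (hc : 0 < c) (hu : 0 < u) :
    c * u ^ 2 = 1 ↔ u = 1 / √c := by
  have hsc : 0 < √c := sqrt_pos.2 hc
  rw [show c * u ^ 2 = (u * √c) ^ 2 by rw [mul_pow, sq_sqrt hc.le, mul_comm],
    pow_eq_one_iff_of_nonneg (by positivity) two_ne_zero, eq_div_iff hsc.ne']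

theorem isMinOn_neg_two_mul_log_add_mul_sq_iff {c t : ℝ} (hc : 0 < c) (ht : 0 < t) :
    IsMinOn (fun u => -2 * log u + c * u ^ 2) (Ioi 0) t ↔ t = 1 / √c := by
  have hrepr : ∀ u, 0 < u → -2 * log u + c * u ^ 2 = c * u ^ 2 - log (c * u ^ 2) + log c := by
    intro u hu
    rw [log_mul hc.ne' (by positivity), log_pow]
    push_cast
    ring
  have hlower : ∀ u, 0 < u → 1 + log c ≤ -2 * log u + c * u ^ 2 := fun u hu => by
    linarith [hrepr u hu, log_le_sub_one_of_pos (show 0 < c * u ^ 2 by positivity)]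
  have hmin : ∀ u, 0 < u → (-2 * log u + c * u ^ 2 = 1 + log c ↔ u = 1 / √c) := by
    intro u hu
    rw [← mul_sq_eq_one_iff_eq_one_div_sqrt hc hu, hrepr u hu]
    refine ⟨fun h => ?_, fun h => by rw [h, log_one]; ring⟩
    by_contra hne
    linarith [log_lt_sub_one_of_pos (show 0 < c * u ^ 2 by positivity) hne]
  have ht₀ : (0 : ℝ) < 1 / √c := by positivity
  rw [isMinOn_iff]
  refine ⟨fun h => (hmin t ht).1 (le_antisymm ?_ (hlower t ht)), fun h u hu => ?_⟩
  · exact (h _ ht₀).trans ((hmin _ ht₀).2 rfl).le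
  · exact ((hmin t ht).2 h).le.trans (hlower u hu)

theorem Matrix.trace_transpose_mul_self {m n R : Type*} [Fintype m] [Fintype n] [CommSemiring R]
    (A : Matrix m n R) : trace (Aᵀ * A) = ∑ j, ∑ i, A i j ^ 2 := by
  simp only [trace, diag, mul_apply, transpose_apply, sq]

theorem Matrix.trace_smul_gram_mul_eq {m n R : Type*} [Fintype m] [Fintype n] [CommSemiring R]
    (c : R) (X : Matrix m n R) (L : Matrix n n R) :
    trace (c • (Xᵀ * X) * Lᵀ * L) = c * ∑ r, ∑ i, (X * Lᵀ) i r ^ 2 := by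
  rw [smul_mul, smul_mul, trace_smul, smul_eq_mul, trace_mul_comm, ← trace_transpose_mul_self]
  simp only [transpose_mul, transpose_transpose, Matrix.mul_assoc]

section RowDecomposition

variable {n p : ℕ} (X : Matrix (Fin n) (Fin p) ℝ) (lam : ℝ) (w : ℕ → ℕ → ℝ)

noncomputable def rowObjective (r : Fin p) (β : Fin p → ℝ) : ℝ :=
  -2 * Real.log (β r)
    + (1 / (n : ℝ)) * ∑ i : Fin n,
        (∑ j ∈ Finset.univ.filter (fun j : Fin p => j ≤ r), X i j * β j) ^ 2
    + lam * ∑ ℓ ∈ Finset.range (r : ℕ),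
        Real.sqrt (∑ m ∈ Finset.univ.filter (fun m : Fin p => (m : ℕ) ≤ ℓ),
          w ℓ (m : ℕ) ^ 2 * β m ^ 2)

noncomputable def penalizedObjective (L : Matrix (Fin p) (Fin p) ℝ) : ℝ :=
  -2 * ∑ r : Fin p, Real.log (L r r)
    + (1 / (n : ℝ)) * ∑ i : Fin n, ∑ j : Fin p, (L.mulVec (fun k => X i k) j) ^ 2
    + lam * ∑ r : Fin p, ∑ ℓ ∈ Finset.range (r : ℕ),
        Real.sqrt (∑ m ∈ Finset.univ.filter (fun m : Fin p => (m : ℕ) ≤ ℓ),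
          w ℓ (m : ℕ) ^ 2 * (L r m) ^ 2)

def lowerRowPos (r : Fin p) : Set (Fin p → ℝ) := {β | (∀ k, r < k → β k = 0) ∧ 0 < β r}

variable {X lam w}

theorem mem_pi_lowerRowPos_iff {M : Fin p → Fin p → ℝ} :
    M ∈ univ.pi lowerRowPos
      ↔ (∀ r k : Fin p, r < k → M r k = 0) ∧ ∀ r : Fin p, 0 < M r r := by
  simp only [mem_univ_pi, lowerRowPos, mem_ofPred_eq, forall_and]

theorem rowObjective_congr {r : Fin p} {β β' : Fin p → ℝ} (h : ∀ j ≤ r, β j = β' j) :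
    rowObjective X lam w r β = rowObjective X lam w r β' := by
  have hm : ∀ ℓ ∈ Finset.range r, ∀ m : Fin p, (m : ℕ) ≤ ℓ → m ≤ r :=
    fun ℓ hℓ m hm => Fin.le_def.2 (hm.trans (Finset.mem_range.1 hℓ).le)
  unfold rowObjective
  rw [h r le_rfl]
  congr 2
  · refine congrArg _ (Finset.sum_congr rfl fun i _ => congrArg (· ^ 2) ?_)
    exact Finset.sum_congr rfl fun j hj => by rw [h j (Finset.mem_filter.1 hj).2]
  · refine Finset.sum_congr rfl fun ℓ hℓ => congrArg _ ?_
    exact Finset.sum_congr rfl fun m hm' => by rw [h m (hm ℓ hℓ m (Finset.mem_filter.1 hm').2)]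

theorem rowObjective_of_val_eq_zero {r : Fin p} (hr : (r : ℕ) = 0) (β : Fin p → ℝ) :
    rowObjective X lam w r β
      = -2 * Real.log (β r) + (1 / (n : ℝ)) * ∑ i, (X i r * β r) ^ 2 := by
  have hfilter : Finset.univ.filter (fun j : Fin p => j ≤ r) = {r} := by
    ext j
    simp [Fin.le_def, Fin.ext_iff, hr]
  simp [rowObjective, hfilter, hr]

theorem sum_filter_le_mul_eq_mul_transpose_apply {L : Matrix (Fin p) (Fin p) ℝ} {r : Fin p}
    (hL : ∀ k, r < k → L r k = 0) (i : Fin n) :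
    ∑ j ∈ Finset.univ.filter (fun j : Fin p => j ≤ r), X i j * L r j = (X * Lᵀ) i r := by
  rw [Finset.sum_filter_of_ne fun k _ hk => not_lt.1 fun hrk => hk (by rw [hL k hrk, mul_zero])]
  rfl

theorem penalizedObjective_eq_sum_rowObjective {L : Matrix (Fin p) (Fin p) ℝ}
    (hL : ∀ r k : Fin p, r < k → L r k = 0) :
    penalizedObjective X lam w L = ∑ r, rowObjective X lam w r (L r) := by
  have hquad : ∑ i : Fin n, ∑ j : Fin p, (L.mulVec (fun k => X i k) j) ^ 2
      = ∑ r : Fin p, ∑ i : Fin n,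
          (∑ j ∈ Finset.univ.filter (fun j : Fin p => j ≤ r), X i j * L r j) ^ 2 := by
    rw [Finset.sum_comm]
    refine Finset.sum_congr rfl fun r _ => Finset.sum_congr rfl fun i _ => ?_
    rw [sum_filter_le_mul_eq_mul_transpose_apply (hL r), mul_apply, mulVec, dotProduct]
    simp only [transpose_apply, mul_comm]
  rw [penalizedObjective, hquad, Finset.mul_sum, Finset.mul_sum, Finset.mul_sum,
    ← Finset.sum_add_distrib, ← Finset.sum_add_distrib]
  rfl

theorem isMinOn_rowObjective_lowerRowPos_iff {r : Fin p} {β : Fin p → ℝ} :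
    IsMinOn (rowObjective X lam w r) (lowerRowPos r) β
      ↔ IsMinOn (rowObjective X lam w r) {β | 0 < β r} β := by
  refine isMinOn_iff_of_retraction (fun γ hγ => hγ.2) (fun γ k => if k ≤ r then γ k else 0)
    (fun γ hγ => ⟨fun k hk => if_neg (not_le.2 hk), by simpa using hγ⟩) fun γ _ => ?_
  exact rowObjective_congr fun j hj => if_pos hj

theorem isMinOn_rowObjective_of_val_eq_zero_iff {r : Fin p} (hr : (r : ℕ) = 0)
    (hS : 0 < ((1 / (n : ℝ)) • (Xᵀ * X)) r r) {β : Fin p → ℝ} (hβ : 0 < β r) :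
    IsMinOn (rowObjective X lam w r) {β | 0 < β r} β
      ↔ β r = 1 / √(((1 / (n : ℝ)) • (Xᵀ * X)) r r) := by
  have hrow : rowObjective X lam w r
      = (fun u => -2 * log u + ((1 / (n : ℝ)) • (Xᵀ * X)) r r * u ^ 2)
          ∘ Function.eval r := by
    ext γ
    simp only [rowObjective_of_val_eq_zero hr, Function.comp_apply, Function.eval,
      Matrix.smul_apply, mul_apply, transpose_apply, smul_eq_mul, Finset.mul_sum, Finset.sum_mul]
    congr 1
    exact Finset.sum_congr rfl fun i _ => by ring
  rw [hrow, ← isMinOn_neg_two_mul_log_add_mul_sq_iff hS hβ]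
  exact isMinOn_comp_preimage_iff (Function.surjective_eval r)

theorem forall_penalizedObjective_le_iff {L : Matrix (Fin p) (Fin p) ℝ}
    (hL : (∀ r k : Fin p, r < k → L r k = 0) ∧ ∀ r : Fin p, 0 < L r r) :
    (∀ M : Matrix (Fin p) (Fin p) ℝ,
        ((∀ r k : Fin p, r < k → M r k = 0) ∧ ∀ r : Fin p, 0 < M r r) →
          penalizedObjective X lam w L ≤ penalizedObjective X lam w M)
      ↔ ∀ r, IsMinOn (rowObjective X lam w r) {β | 0 < β r} (L r) := by
  refine (forall_congr' fun M => ⟨fun h hM => ?_, fun h hM => ?_⟩).trans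
    ((isMinOn_iff.symm.trans (isMinOn_pi_sum_iff (mem_pi_lowerRowPos_iff.2 hL))).trans
      (forall_congr' fun r => isMinOn_rowObjective_lowerRowPos_iff))
  · have hM' := mem_pi_lowerRowPos_iff.1 hM
    rw [← penalizedObjective_eq_sum_rowObjective hL.1,
      ← penalizedObjective_eq_sum_rowObjective hM'.1]
    exact h hM'
  · rw [penalizedObjective_eq_sum_rowObjective hL.1, penalizedObjective_eq_sum_rowObjective hM.1]
    exact h (mem_pi_lowerRowPos_iff.2 hM)

end RowDecomposition

-- Rows and columns are 0-based: row `0` is the paper's row `1`.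
theorem stmt_1_general (n p : ℕ) (hp : 0 < p)
    (X : Matrix (Fin n) (Fin p) ℝ)
    (lam : ℝ)
    (w : ℕ → ℕ → ℝ)
    (S : Matrix (Fin p) (Fin p) ℝ) (hS : S = (1 / (n : ℝ)) • (Xᵀ * X))
    (hS00 : 0 < S ⟨0, hp⟩ ⟨0, hp⟩)
    (F : Fin p → (Fin p → ℝ) → ℝ)
    (hF : ∀ (r : Fin p) (β : Fin p → ℝ),
      F r β = -2 * Real.log (β r)
        + (1 / (n : ℝ)) * ∑ i : Fin n,
            (∑ j ∈ Finset.univ.filter (fun j : Fin p => j ≤ r), X i j * β j) ^ 2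
        + lam * ∑ ℓ ∈ Finset.range (r : ℕ),
            Real.sqrt (∑ m ∈ Finset.univ.filter (fun m : Fin p => (m : ℕ) ≤ ℓ),
              w ℓ (m : ℕ) ^ 2 * β m ^ 2))
    (obj : Matrix (Fin p) (Fin p) ℝ → ℝ)
    (hobj : ∀ L : Matrix (Fin p) (Fin p) ℝ,
      obj L = -2 * ∑ r : Fin p, Real.log (L r r)
        + (1 / (n : ℝ)) * ∑ i : Fin n, ∑ j : Fin p, (L.mulVec (fun k => X i k) j) ^ 2
        + lam * ∑ r : Fin p, ∑ ℓ ∈ Finset.range (r : ℕ),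
            Real.sqrt (∑ m ∈ Finset.univ.filter (fun m : Fin p => (m : ℕ) ≤ ℓ),
              w ℓ (m : ℕ) ^ 2 * (L r m) ^ 2)) :
    -- (a) the trace identity
    (∀ L : Matrix (Fin p) (Fin p) ℝ, (∀ r k : Fin p, r < k → L r k = 0) →
      Matrix.trace (S * Lᵀ * L)
        = (1 / (n : ℝ)) * ∑ r : Fin p, ∑ i : Fin n,
            (∑ j ∈ Finset.univ.filter (fun j : Fin p => j ≤ r), X i j * L r j) ^ 2) ∧
    -- (b) the decomposition of the penalized objective
    (∀ L : Matrix (Fin p) (Fin p) ℝ, (∀ r k : Fin p, r < k → L r k = 0) →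
      obj L = (-2 * Real.log (L ⟨0, hp⟩ ⟨0, hp⟩)
          + (1 / (n : ℝ)) * ∑ i : Fin n, (X i ⟨0, hp⟩ * L ⟨0, hp⟩ ⟨0, hp⟩) ^ 2)
        + ∑ r ∈ Finset.univ.filter (fun r : Fin p => 1 ≤ (r : ℕ)), F r (fun j => L r j)) ∧
    -- (c) minimizers of the penalized objective are exactly rowwise minimizers
    (∀ L : Matrix (Fin p) (Fin p) ℝ,
      ((∀ r k : Fin p, r < k → L r k = 0) ∧ (∀ r : Fin p, 0 < L r r)) →
      ((∀ M : Matrix (Fin p) (Fin p) ℝ,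
          ((∀ r k : Fin p, r < k → M r k = 0) ∧ (∀ r : Fin p, 0 < M r r)) →
          obj L ≤ obj M) ↔
        ((∀ r : Fin p, 1 ≤ (r : ℕ) → ∀ β : Fin p → ℝ, 0 < β r →
            F r (fun j => L r j) ≤ F r β) ∧
          L ⟨0, hp⟩ ⟨0, hp⟩ = 1 / Real.sqrt (S ⟨0, hp⟩ ⟨0, hp⟩)))) := by
  subst hS
  obtain rfl : F = rowObjective X lam w := funext fun r => funext (hF r)
  obtain rfl : obj = penalizedObjective X lam w := funext hobj
  set z : Fin p := ⟨0, hp⟩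
  have hrows : Finset.univ.filter (fun r : Fin p => 1 ≤ (r : ℕ)) = Finset.univ.erase z := by
    ext r
    simp [Fin.ext_iff, Nat.one_le_iff_ne_zero, z]
  have hforall : ∀ Q : Fin p → Prop,
      (∀ r, Q r) ↔ (∀ r : Fin p, 1 ≤ (r : ℕ) → Q r) ∧ Q z := by
    refine fun Q => ⟨fun h => ⟨fun r _ => h r, h z⟩, fun ⟨hpos, hz⟩ r => ?_⟩
    rcases Nat.eq_zero_or_pos r with hr | hr
    · rwa [show r = z from Fin.ext hr]
    · exact hpos r hr
  refine ⟨fun L hL => ?_, fun L hL => ?_, fun L hL => ?_⟩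
  · simp only [sum_filter_le_mul_eq_mul_transpose_apply (hL _)]
    exact trace_smul_gram_mul_eq _ X L
  · rw [penalizedObjective_eq_sum_rowObjective hL,
      ← Finset.add_sum_erase _ _ (Finset.mem_univ z), rowObjective_of_val_eq_zero rfl, hrows]
  · rw [forall_penalizedObjective_le_iff hL, hforall,
      isMinOn_rowObjective_of_val_eq_zero_iff rfl hS00 (hL.2 z)]
    rfl

/-- decoupling, Appendix `online:decouple`: with `S = (1/n)XᵀX`, for every
lower-triangular `L` the trace identity
`tr(S Lᵀ L) = (1/n) Σ_r ‖X_{1:r}(L_{r,1:r})ᵀ‖₂²` holds; the penalized objective decomposes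
as the first-row term plus `Σ_{r ≥ 2} F_r(L_{r,1:r})`; and a lower-triangular `L` with
positive diagonal minimizes the penalized objective over such matrices iff each row
`r ≥ 2` minimizes the `r`-th row subproblem `F_r` and (given `S₁₁ > 0`)
`L₁₁ = 1/√(S₁₁)`.  Rows/columns are 0-based: row `0` is the paper's row `1`. -/
theorem stmt_1 (n p : ℕ) (hp : 0 < p)
    (X : Matrix (Fin n) (Fin p) ℝ)
    (lam : ℝ) (hlam : 0 ≤ lam)
    (w : ℕ → ℕ → ℝ) (hw : ∀ ℓ m : ℕ, 0 < w ℓ m)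
    (S : Matrix (Fin p) (Fin p) ℝ) (hS : S = (1 / (n : ℝ)) • (Xᵀ * X))
    (hS00 : 0 < S ⟨0, hp⟩ ⟨0, hp⟩)
    (F : Fin p → (Fin p → ℝ) → ℝ)
    (hF : ∀ (r : Fin p) (β : Fin p → ℝ),
      F r β = -2 * Real.log (β r)
        + (1 / (n : ℝ)) * ∑ i : Fin n,
            (∑ j ∈ Finset.univ.filter (fun j : Fin p => j ≤ r), X i j * β j) ^ 2
        + lam * ∑ ℓ ∈ Finset.range (r : ℕ),
            Real.sqrt (∑ m ∈ Finset.univ.filter (fun m : Fin p => (m : ℕ) ≤ ℓ),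
              w ℓ (m : ℕ) ^ 2 * β m ^ 2))
    (obj : Matrix (Fin p) (Fin p) ℝ → ℝ)
    (hobj : ∀ L : Matrix (Fin p) (Fin p) ℝ,
      obj L = -2 * ∑ r : Fin p, Real.log (L r r)
        + (1 / (n : ℝ)) * ∑ i : Fin n, ∑ j : Fin p, (L.mulVec (fun k => X i k) j) ^ 2
        + lam * ∑ r : Fin p, ∑ ℓ ∈ Finset.range (r : ℕ),
            Real.sqrt (∑ m ∈ Finset.univ.filter (fun m : Fin p => (m : ℕ) ≤ ℓ),
              w ℓ (m : ℕ) ^ 2 * (L r m) ^ 2)) :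
    -- (a) the trace identity
    (∀ L : Matrix (Fin p) (Fin p) ℝ, (∀ r k : Fin p, r < k → L r k = 0) →
      Matrix.trace (S * Lᵀ * L)
        = (1 / (n : ℝ)) * ∑ r : Fin p, ∑ i : Fin n,
            (∑ j ∈ Finset.univ.filter (fun j : Fin p => j ≤ r), X i j * L r j) ^ 2) ∧
    -- (b) the decomposition of the penalized objective
    (∀ L : Matrix (Fin p) (Fin p) ℝ, (∀ r k : Fin p, r < k → L r k = 0) →
      obj L = (-2 * Real.log (L ⟨0, hp⟩ ⟨0, hp⟩)
          + (1 / (n : ℝ)) * ∑ i : Fin n, (X i ⟨0, hp⟩ * L ⟨0, hp⟩ ⟨0, hp⟩) ^ 2)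
        + ∑ r ∈ Finset.univ.filter (fun r : Fin p => 1 ≤ (r : ℕ)), F r (fun j => L r j)) ∧
    -- (c) minimizers of the penalized objective are exactly rowwise minimizers
    (∀ L : Matrix (Fin p) (Fin p) ℝ,
      ((∀ r k : Fin p, r < k → L r k = 0) ∧ (∀ r : Fin p, 0 < L r r)) →
      ((∀ M : Matrix (Fin p) (Fin p) ℝ,
          ((∀ r k : Fin p, r < k → M r k = 0) ∧ (∀ r : Fin p, 0 < M r r)) →
          obj L ≤ obj M) ↔
        ((∀ r : Fin p, 1 ≤ (r : ℕ) → ∀ β : Fin p → ℝ, 0 < β r →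
            F r (fun j => L r j) ≤ F r β) ∧
          L ⟨0, hp⟩ ⟨0, hp⟩ = 1 / Real.sqrt (S ⟨0, hp⟩ ⟨0, hp⟩)))) :=
  stmt_1_general n p hp X lam w S hS hS00 F hF obj hobj
end

section
/- Let X ∈ ℝ^{n×r} with r ≥ 2, S = (1/n)XᵀX, ρ > 0, and u, γ ∈ ℝ^r; write the subscript −r for the first r−1 coordinates. Then the matrix 2S_{−r,−r} + ρI is invertible; the quantity A = 4 S_{r,−r}(2S_{−r,−r}+ρI)^{−1}S_{−r,r} − 2S_{rr} − ρ satisfies A < 0; and, with B = 2S_{r,−r}(2S_{−r,−r}+ρI)^{−1}(u_{−r} − ργ_{−r}) − u_r + ργ_r, the function β ↦ −2 log β_r + (1/n)‖Xβ‖₂² + (β − γ)ᵀu + (ρ/2)‖β − γ‖₂² has a unique minimizer over {β ∈ ℝ^r : β_r > 0}, given by β_r = (−B − √(B² − 8A))/(2A) > 0 and β_{−r} = −(2S_{−r,−r}+ρI)^{−1}(2S_{−r,r}β_r + u_{−r} − ργ_{−r}). -/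
/-!
With `N = 2S + ρ·diag(1, …, 1, 0)` positive semidefinite, `M` is the leading block of `N`, hence
positive definite, and `-(A + ρ)` is the Schur complement of `M` in `N`, so `A ≤ -ρ < 0`.
The first `r - 1` partial derivatives of `f` vanish at `β*` by the choice of `β*_{-r}`, and the
last one vanishes exactly when `A β_r² + B β_r + 2 = 0`, of which `β_r` is the positive root.
Then `f β - f β*` is the tangent-line gap of `-2 log` at `β*_r`, plus `(β - β*)ᵀ S (β - β*)`,
plus `(ρ/2)‖β - β*‖²`: all three are nonnegative and the last vanishes only at `β = β*`.
-/

open Matrix Real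

lemma Real.log_le_log_add_sub_div {x y : ℝ} (hx : 0 < x) (hy : 0 < y) :
    log x ≤ log y + (x - y) / y := by
  have h := log_le_sub_one_of_pos (div_pos hx hy)
  rw [log_div hx.ne' hy.ne'] at h
  have hdiv : x / y - 1 = (x - y) / y := by field_simp
  linarith

lemma quadratic_root_pos_and_eq_zero {a b c x : ℝ} (ha : a < 0) (hc : 0 < c)
    (hx : x = (-b - √(b ^ 2 - 4 * a * c)) / (2 * a)) : 0 < x ∧ a * x ^ 2 + b * x + c = 0 := by
  have hdisc : 0 ≤ b ^ 2 - 4 * a * c := by nlinarith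
  constructor
  · have hb : |b| < √(b ^ 2 - 4 * a * c) :=
      abs_lt_of_sq_lt_sq (by rw [sq_sqrt hdisc]; nlinarith) (sqrt_nonneg _)
    rw [hx]
    exact div_pos_of_neg_of_neg (by linarith [neg_abs_le b]) (by linarith)
  · have hd : discrim a b c = √(b ^ 2 - 4 * a * c) * √(b ^ 2 - 4 * a * c) := by
      rw [mul_self_sqrt hdisc, discrim]
    rw [sq, quadratic_eq_zero_iff ha.ne hd]
    exact Or.inr hx

section Objective

variable {ι : Type*} [Fintype ι]

lemma dotProduct_mulVec_add_of_isSymm {S : Matrix ι ι ℝ} (hS : S.IsSymm) (x d : ι → ℝ) :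
    (x + d) ⬝ᵥ S *ᵥ (x + d) = x ⬝ᵥ S *ᵥ x + 2 * (d ⬝ᵥ S *ᵥ x) + d ⬝ᵥ S *ᵥ d := by
  have hswap : x ⬝ᵥ S *ᵥ d = d ⬝ᵥ S *ᵥ x := by
    rw [dotProduct_mulVec, dotProduct_comm]
    conv_lhs => rw [← hS.eq, vecMul_transpose]
  rw [mulVec_add, dotProduct_add, add_dotProduct, add_dotProduct, hswap]
  ring

lemma dotProduct_self_add (x d : ι → ℝ) :
    (x + d) ⬝ᵥ (x + d) = x ⬝ᵥ x + 2 * (d ⬝ᵥ x) + d ⬝ᵥ d := by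
  rw [dotProduct_add, add_dotProduct, add_dotProduct, dotProduct_comm x d]
  ring

lemma dotProduct_transpose_mul_self_mulVec {m : Type*} [Fintype m] (X : Matrix m ι ℝ)
    (β : ι → ℝ) : β ⬝ᵥ (Xᵀ * X) *ᵥ β = ∑ i, (X *ᵥ β) i ^ 2 := by
  rw [← mulVec_mulVec, dotProduct_mulVec, vecMul_transpose]
  simp [dotProduct, sq]

noncomputable def barrierObjective (S : Matrix ι ι ℝ) (ρ : ℝ) (u γ : ι → ℝ) (i₀ : ι)
    (β : ι → ℝ) : ℝ :=
  -2 * log (β i₀) + β ⬝ᵥ S *ᵥ β + (β - γ) ⬝ᵥ u + ρ / 2 * ((β - γ) ⬝ᵥ (β - γ))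

theorem barrierObjective_add_le [DecidableEq ι] {S : Matrix ι ι ℝ} (hS : S.PosSemidef) {ρ : ℝ}
    {u γ : ι → ℝ} {i₀ : ι} {β' : ι → ℝ}
    (hgrad : (2 : ℝ) • (S *ᵥ β') + ρ • (β' - γ) + u = Pi.single i₀ (2 / β' i₀)) (hβ' : 0 < β' i₀)
    {β : ι → ℝ} (hβ : 0 < β i₀) :
    barrierObjective S ρ u γ i₀ β' + ρ / 2 * ((β - β') ⬝ᵥ (β - β'))
      ≤ barrierObjective S ρ u γ i₀ β := by
  set d := β - β'
  have hβ_eq : β = β' + d := by simp [d]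
  have hquad := dotProduct_mulVec_add_of_isSymm (isHermitian_iff_isSymm.mp hS.isHermitian) β' d
  rw [← hβ_eq] at hquad
  have hsq := dotProduct_self_add (β' - γ) d
  have hlin : β - γ = β' - γ + d := by simp [d]
  have hgd := congrArg (d ⬝ᵥ ·) hgrad
  simp only [dotProduct_add, dotProduct_smul, dotProduct_single, smul_eq_mul] at hgd
  have hlog_gap : d i₀ * (2 / β' i₀) = 2 * ((β i₀ - β' i₀) / β' i₀) := by
    simp only [d, Pi.sub_apply]
    ring
  have hlog := log_le_log_add_sub_div hβ hβ'
  have hSd : 0 ≤ d ⬝ᵥ S *ᵥ d := by simpa using hS.dotProduct_mulVec_nonneg d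
  unfold barrierObjective
  rw [hquad, hlin, hsq, add_dotProduct]
  linarith

end Objective

section Blocks

variable {k : ℕ}

lemma mulVec_snoc_castSucc (S : Matrix (Fin (k + 1)) (Fin (k + 1)) ℝ) (e : Fin k → ℝ) (a : ℝ)
    (i : Fin k) :
    (S *ᵥ Fin.snoc e a) i.castSucc
      = (S.submatrix Fin.castSucc Fin.castSucc *ᵥ e) i + S i.castSucc (Fin.last k) * a := by
  simp [mulVec, dotProduct, Fin.sum_univ_castSucc]

lemma mulVec_snoc_last (S : Matrix (Fin (k + 1)) (Fin (k + 1)) ℝ) (e : Fin k → ℝ) (a : ℝ) :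
    (S *ᵥ Fin.snoc e a) (Fin.last k)
      = (fun j => S (Fin.last k) j.castSucc) ⬝ᵥ e + S (Fin.last k) (Fin.last k) * a := by
  simp [mulVec, dotProduct, Fin.sum_univ_castSucc]

lemma snoc_dotProduct (e : Fin k → ℝ) (a : ℝ) (x : Fin (k + 1) → ℝ) :
    Fin.snoc e a ⬝ᵥ x = e ⬝ᵥ (fun i => x i.castSucc) + a * x (Fin.last k) := by
  simp [dotProduct, Fin.sum_univ_castSucc]

theorem Matrix.PosSemidef.schur_complement_last_nonneg {N : Matrix (Fin (k + 1)) (Fin (k + 1)) ℝ}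
    (hN : N.PosSemidef) (hdet : IsUnit (N.submatrix Fin.castSucc Fin.castSucc).det) :
    (fun j => N (Fin.last k) j.castSucc) ⬝ᵥ
        ((N.submatrix Fin.castSucc Fin.castSucc)⁻¹ *ᵥ fun i => N i.castSucc (Fin.last k))
      ≤ N (Fin.last k) (Fin.last k) := by
  set N' := N.submatrix Fin.castSucc Fin.castSucc
  set c : Fin k → ℝ := fun i => N i.castSucc (Fin.last k)
  have hN' : N' *ᵥ (N'⁻¹ *ᵥ c) = c := by rw [mulVec_mulVec, mul_nonsing_inv _ hdet, one_mulVec]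
  have hcs (i : Fin k) : (N *ᵥ Fin.snoc (-(N'⁻¹ *ᵥ c)) 1) i.castSucc = 0 := by
    rw [mulVec_snoc_castSucc, mulVec_neg, hN']
    simp [c]
  have := hN.dotProduct_mulVec_nonneg (Fin.snoc (-(N'⁻¹ *ᵥ c)) 1)
  rw [star_trivial, snoc_dotProduct, mulVec_snoc_last] at this
  simpa [hcs, dotProduct_neg] using this

theorem Matrix.PosSemidef.schur_complement_last_regularized_nonneg
    {S : Matrix (Fin (k + 1)) (Fin (k + 1)) ℝ} (hS : S.PosSemidef) {ρ : ℝ} (hρ : 0 ≤ ρ)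
    {M : Matrix (Fin k) (Fin k) ℝ}
    (hM : M = (2 : ℝ) • S.submatrix Fin.castSucc Fin.castSucc + ρ • 1) (hdet : IsUnit M.det) :
    4 * (fun i => S (Fin.last k) i.castSucc) ⬝ᵥ (M⁻¹ *ᵥ fun i => S i.castSucc (Fin.last k))
      ≤ 2 * S (Fin.last k) (Fin.last k) := by
  set N := (2 : ℝ) • S + ρ • diagonal (Fin.snoc (fun _ => 1) 0)
  have hN : N.PosSemidef :=
    (hS.smul zero_le_two).add ((PosSemidef.diagonal fun i => by
      induction i using Fin.lastCases <;> simp).smul hρ)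
  have hN' : N.submatrix Fin.castSucc Fin.castSucc = M := by
    ext i j
    simp [N, hM, diagonal_apply, one_apply]
  have := hN.schur_complement_last_nonneg (hN' ▸ hdet)
  simp only [hN', N, add_apply, smul_apply, diagonal_apply, Fin.castSucc_ne_last,
    (Fin.castSucc_ne_last _).symm, if_false, add_zero, if_true, Fin.snoc_last,
    smul_eq_mul, mul_zero] at this
  have htwo (v : Fin k → ℝ) : (fun i => 2 * v i) = (2 : ℝ) • v := rfl
  rw [htwo, htwo, mulVec_smul, dotProduct_smul, smul_dotProduct, smul_eq_mul, smul_eq_mul] at this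
  linarith

theorem gradient_snoc_eq_single_last {S : Matrix (Fin (k + 1)) (Fin (k + 1)) ℝ} {ρ : ℝ}
    {u γ : Fin (k + 1) → ℝ} {M : Matrix (Fin k) (Fin k) ℝ}
    (hM : M = (2 : ℝ) • S.submatrix Fin.castSucc Fin.castSucc + ρ • 1) (hdet : IsUnit M.det)
    {A B βr : ℝ}
    (hA : A = 4 * (fun i => S (Fin.last k) i.castSucc) ⬝ᵥ
          (M⁻¹ *ᵥ fun i => S i.castSucc (Fin.last k)) - 2 * S (Fin.last k) (Fin.last k) - ρ)
    (hB : B = 2 * (fun i => S (Fin.last k) i.castSucc) ⬝ᵥ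
          (M⁻¹ *ᵥ fun i => u i.castSucc - ρ * γ i.castSucc) - u (Fin.last k) + ρ * γ (Fin.last k))
    (hroot : A * βr ^ 2 + B * βr + 2 = 0) (hβr : βr ≠ 0) {b : Fin k → ℝ}
    (hb : b = fun i => -(M⁻¹ *ᵥ fun j =>
        2 * S j.castSucc (Fin.last k) * βr + u j.castSucc - ρ * γ j.castSucc) i) :
    (2 : ℝ) • (S *ᵥ Fin.snoc b βr) + ρ • (Fin.snoc b βr - γ) + u
      = Pi.single (Fin.last k) (2 / βr) := by
  set w : Fin k → ℝ := fun i => S i.castSucc (Fin.last k)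
  set c : Fin k → ℝ := fun i => u i.castSucc - ρ * γ i.castSucc
  have hb' : b = -((2 * βr) • (M⁻¹ *ᵥ w) + M⁻¹ *ᵥ c) := by
    rw [hb, ← mulVec_smul, ← mulVec_add]
    ext i
    simp only [Pi.neg_apply, neg_inj]
    congr 2
    ext j
    simp only [Pi.add_apply, Pi.smul_apply, smul_eq_mul, w, c]
    ring
  have hMb : M *ᵥ b = -((2 * βr) • w + c) := by
    rw [hb', mulVec_neg, mulVec_add, mulVec_smul, mulVec_mulVec, mulVec_mulVec,
      mul_nonsing_inv _ hdet, one_mulVec, one_mulVec]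
  ext i
  induction i using Fin.lastCases with
  | last =>
    rw [hb']
    simp only [Pi.add_apply, Pi.smul_apply, Pi.sub_apply, smul_eq_mul, mulVec_snoc_last,
      Fin.snoc_last, Pi.single_eq_same, dotProduct_neg, dotProduct_add, dotProduct_smul]
    field_simp
    rw [hA, hB] at hroot
    linear_combination -hroot
  | cast i =>
    have hMi := congrFun hMb i
    rw [hM] at hMi
    simp only [add_mulVec, smul_mulVec, one_mulVec, Pi.add_apply, Pi.smul_apply, smul_eq_mul,
      Pi.neg_apply] at hMi
    simp only [Pi.add_apply, Pi.smul_apply, Pi.sub_apply, smul_eq_mul, mulVec_snoc_castSucc,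
      Fin.snoc_castSucc, Pi.single_apply, Fin.castSucc_ne_last, if_false]
    simp only [w, c] at hMi
    linear_combination hMi

end Blocks

theorem stmt_3_general (n k : ℕ)
    (X : Matrix (Fin n) (Fin (k + 1)) ℝ)
    (ρ : ℝ) (hρ : 0 < ρ) (u γ : Fin (k + 1) → ℝ)
    (S : Matrix (Fin (k + 1)) (Fin (k + 1)) ℝ)
    (hS : S = (1 / (n : ℝ)) • (Xᵀ * X))
    (M : Matrix (Fin k) (Fin k) ℝ)
    (hM : M = (2 : ℝ) • S.submatrix Fin.castSucc Fin.castSucc + ρ • (1 : Matrix (Fin k) (Fin k) ℝ))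
    (A B : ℝ)
    (hA : A = 4 * dotProduct (fun i : Fin k => S (Fin.last k) i.castSucc)
              (M⁻¹.mulVec (fun i : Fin k => S i.castSucc (Fin.last k)))
            - 2 * S (Fin.last k) (Fin.last k) - ρ)
    (hB : B = 2 * dotProduct (fun i : Fin k => S (Fin.last k) i.castSucc)
              (M⁻¹.mulVec (fun i : Fin k => u i.castSucc - ρ * γ i.castSucc))
            - u (Fin.last k) + ρ * γ (Fin.last k))
    (βr : ℝ) (hβr : βr = (-B - Real.sqrt (B ^ 2 - 8 * A)) / (2 * A))
    (βstar : Fin (k + 1) → ℝ)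
    (hβstar : βstar = Fin.snoc
      (fun i : Fin k => -(M⁻¹.mulVec
        (fun j : Fin k => 2 * S j.castSucc (Fin.last k) * βr + u j.castSucc - ρ * γ j.castSucc) i))
      βr)
    (f : (Fin (k + 1) → ℝ) → ℝ)
    (hf : ∀ β : Fin (k + 1) → ℝ,
      f β = -2 * Real.log (β (Fin.last k)) + (1 / (n : ℝ)) * ∑ i : Fin n, (X.mulVec β i) ^ 2
        + (∑ j : Fin (k + 1), (β j - γ j) * u j)
        + (ρ / 2) * ∑ j : Fin (k + 1), (β j - γ j) ^ 2) :
    IsUnit M.det ∧ A < 0 ∧ 0 < βr ∧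
      (∀ β : Fin (k + 1) → ℝ, 0 < β (Fin.last k) → f βstar ≤ f β) ∧
      (∀ β : Fin (k + 1) → ℝ, 0 < β (Fin.last k) → f β = f βstar → β = βstar) := by
  have hSpsd : S.PosSemidef := by
    rw [hS, ← conjTranspose_eq_transpose_of_trivial]
    exact (posSemidef_conjTranspose_mul_self X).smul (by positivity)
  have hdet : IsUnit M.det := by
    rw [← isUnit_iff_isUnit_det, hM]
    exact (PosDef.posSemidef_add ((hSpsd.submatrix _).smul zero_le_two) (PosDef.one.smul hρ)).isUnit
  have hA0 : A < 0 := by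
    linarith [hSpsd.schur_complement_last_regularized_nonneg hρ.le hM hdet]
  obtain ⟨hβr_pos, hroot⟩ :=
    quadratic_root_pos_and_eq_zero (b := B) (x := βr) hA0 two_pos (by rw [hβr]; ring_nf)
  have hβstar_last : βstar (Fin.last k) = βr := by simp [hβstar]
  have hgrad : (2 : ℝ) • (S *ᵥ βstar) + ρ • (βstar - γ) + u
      = Pi.single (Fin.last k) (2 / βstar (Fin.last k)) := by
    rw [hβstar_last, hβstar]
    exact gradient_snoc_eq_single_last hM hdet hA hB hroot hβr_pos.ne' rfl
  have hf' : f = barrierObjective S ρ u γ (Fin.last k) := by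
    ext β
    rw [hf, barrierObjective, hS, smul_mulVec, dotProduct_smul,
      dotProduct_transpose_mul_self_mulVec]
    simp [dotProduct, sq]
  subst hf'
  have hmin (β : Fin (k + 1) → ℝ) (hβ : 0 < β (Fin.last k)) :=
    barrierObjective_add_le hSpsd hgrad (hβstar_last ▸ hβr_pos) hβ
  have hdist (β : Fin (k + 1) → ℝ) : 0 ≤ (β - βstar) ⬝ᵥ (β - βstar) := by
    simpa using dotProduct_star_self_nonneg (β - βstar)
  refine ⟨hdet, hA0, hβr_pos, fun β hβ => ?_, fun β hβ hfβ => ?_⟩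
  · nlinarith [hmin β hβ, hdist β]
  · have hzero : (β - βstar) ⬝ᵥ (β - βstar) = 0 := by nlinarith [hmin β hβ, hdist β]
    exact sub_eq_zero.mp (dotProduct_self_eq_zero.mp hzero)

/-- closed form of the ADMM `β`-update.  Here `r = k + 1 ≥ 2`, the last
coordinate plays the role of the `r`-th coordinate, and `−r` denotes the first `k = r−1`
coordinates (via `Fin.castSucc`).  `S = (1/n) Xᵀ X`, `M = 2 S_{−r,−r} + ρ I` is invertible,
`A < 0`, and the function
`β ↦ −2 log β_r + (1/n)‖Xβ‖₂² + (β−γ)ᵀu + (ρ/2)‖β−γ‖₂²`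
has the stated unique minimizer over `{β : β_r > 0}`. -/
theorem stmt_3 (n k : ℕ) (hk : 1 ≤ k)
    (X : Matrix (Fin n) (Fin (k + 1)) ℝ)
    (ρ : ℝ) (hρ : 0 < ρ) (u γ : Fin (k + 1) → ℝ)
    (S : Matrix (Fin (k + 1)) (Fin (k + 1)) ℝ)
    (hS : S = (1 / (n : ℝ)) • (Xᵀ * X))
    (M : Matrix (Fin k) (Fin k) ℝ)
    (hM : M = (2 : ℝ) • S.submatrix Fin.castSucc Fin.castSucc + ρ • (1 : Matrix (Fin k) (Fin k) ℝ))
    (A B : ℝ)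
    (hA : A = 4 * dotProduct (fun i : Fin k => S (Fin.last k) i.castSucc)
              (M⁻¹.mulVec (fun i : Fin k => S i.castSucc (Fin.last k)))
            - 2 * S (Fin.last k) (Fin.last k) - ρ)
    (hB : B = 2 * dotProduct (fun i : Fin k => S (Fin.last k) i.castSucc)
              (M⁻¹.mulVec (fun i : Fin k => u i.castSucc - ρ * γ i.castSucc))
            - u (Fin.last k) + ρ * γ (Fin.last k))
    (βr : ℝ) (hβr : βr = (-B - Real.sqrt (B ^ 2 - 8 * A)) / (2 * A))
    (βstar : Fin (k + 1) → ℝ)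
    (hβstar : βstar = Fin.snoc
      (fun i : Fin k => -(M⁻¹.mulVec
        (fun j : Fin k => 2 * S j.castSucc (Fin.last k) * βr + u j.castSucc - ρ * γ j.castSucc) i))
      βr)
    (f : (Fin (k + 1) → ℝ) → ℝ)
    (hf : ∀ β : Fin (k + 1) → ℝ,
      f β = -2 * Real.log (β (Fin.last k)) + (1 / (n : ℝ)) * ∑ i : Fin n, (X.mulVec β i) ^ 2
        + (∑ j : Fin (k + 1), (β j - γ j) * u j)
        + (ρ / 2) * ∑ j : Fin (k + 1), (β j - γ j) ^ 2) :
    IsUnit M.det ∧ A < 0 ∧ 0 < βr ∧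
      (∀ β : Fin (k + 1) → ℝ, 0 < β (Fin.last k) → f βstar ≤ f β) ∧
      (∀ β : Fin (k + 1) → ℝ, 0 < β (Fin.last k) → f β = f βstar → β = βstar) :=
  stmt_3_general n k X ρ hρ u γ S hS M hM A B hA hB βr hβr βstar hβstar f hf
end

section
/- Let r ≥ 2, y ∈ ℝ^r, τ > 0, and weights w_{ℓm} > 0 for 1 ≤ m ≤ ℓ ≤ r−1; write W^{(ℓ)} ∈ ℝ^r for the vector with m-th entry w_{ℓm} for m ≤ ℓ and 0 otherwise, g_ℓ = {1,…,ℓ}, and ∗ for the entrywise product. Consider the primal problem: minimize over γ ∈ ℝ^r the function (1/2)‖γ − y‖₂² + τ·Σ_{ℓ=1}^{r−1}(Σ_{m=1}^ℓ w_{ℓm}²γ_m²)^{1/2}, and the dual problem: minimize ‖y − τ·Σ_{ℓ=1}^{r−1} W^{(ℓ)}∗a^{(ℓ)}‖₂² over tuples (a^{(1)},…,a^{(r−1)}) with a^{(ℓ)} ∈ ℝ^r, ‖(a^{(ℓ)})_{g_ℓ}‖₂ ≤ 1, and (a^{(ℓ)})_m = 0 for m > ℓ. Then the dual problem attains its minimum,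 and for any dual minimizer (â^{(1)},…,â^{(r−1)}) the vector γ̂ = y − τ·Σ_{ℓ=1}^{r−1} W^{(ℓ)}∗â^{(ℓ)} is the unique minimizer of the primal problem. -/
/-!
The vectors `τ Σ_ℓ W^{(ℓ)} ∗ a^{(ℓ)}` with `a` dual feasible form a compact convex set `K`, so
the dual minimum is attained, and by Cauchy–Schwarz (with equality at `a^{(ℓ)} ∝ W^{(ℓ)} ∗ γ`)
the penalty is the support function `σ_K` of `K`. A dual minimiser is a nearest point `u` of `K`
to `y`, so `⟪y - u, v - u⟫ ≤ 0` on `K`. Hence `σ_K(y - u) = ⟪u, y - u⟫`, and expanding the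
square gives `P(y - u) + ½‖γ - (y - u)‖² ≤ P(γ)` for the primal objective `P` (Moreau's
decomposition).
-/

open Finset

open scoped RealInnerProductSpace

section ProxDuality

variable {E : Type*} [NormedAddCommGroup E] [InnerProductSpace ℝ E] {K : Set E} {y u : E}

theorem inner_sub_le_zero_of_forall_norm_le (hK : Convex ℝ K) (hu : u ∈ K)
    (hmin : ∀ v ∈ K, ‖y - u‖ ≤ ‖y - v‖) : ∀ v ∈ K, ⟪y - u, v - u⟫ ≤ 0 := by
  have : Nonempty K := ⟨⟨u, hu⟩⟩
  refine (norm_eq_iInf_iff_real_inner_le_zero hK hu).1 <| le_antisymm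
    (le_ciInf fun v => hmin v v.2)
    (ciInf_le ⟨0, Set.forall_mem_range.2 fun _ => norm_nonneg _⟩ (⟨u, hu⟩ : K))

theorem half_sq_add_le_of_nearest_of_support (hK : Convex ℝ K) (hu : u ∈ K)
    (hmin : ∀ v ∈ K, ‖y - u‖ ≤ ‖y - v‖) (Ω : E → ℝ) (hΩ_ge : ∀ v ∈ K, ∀ γ, ⟪v, γ⟫ ≤ Ω γ)
    (hΩ_le : ∀ γ, ∃ v ∈ K, Ω γ ≤ ⟪v, γ⟫) (γ : E) :
    1 / 2 * ‖y - u - y‖ ^ 2 + Ω (y - u) + 1 / 2 * ‖γ - (y - u)‖ ^ 2 ≤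
      1 / 2 * ‖γ - y‖ ^ 2 + Ω γ := by
  have hVI : ∀ v ∈ K, ⟪v, y - u⟫ ≤ ⟪u, y - u⟫ := by
    intro v hv
    have := inner_sub_le_zero_of_forall_norm_le hK hu hmin v hv
    rw [inner_sub_right, real_inner_comm v, real_inner_comm u] at this
    linarith
  have hΩ : Ω (y - u) = ⟪u, y - u⟫ := by
    obtain ⟨v, hv, hle⟩ := hΩ_le (y - u)
    exact le_antisymm (hle.trans (hVI v hv)) (hΩ_ge u hu _)
  have hsq : ‖γ - y‖ ^ 2 = ‖γ - (y - u)‖ ^ 2 - 2 * ⟪γ - (y - u), u⟫ + ‖u‖ ^ 2 := by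
    rw [← norm_sub_sq_real, sub_sub, sub_add_cancel]
  have hsplit : ⟪u, γ⟫ = ⟪γ - (y - u), u⟫ + ⟪u, y - u⟫ := by
    rw [real_inner_comm γ u, real_inner_comm (y - u) u, ← inner_add_left, sub_add_cancel]
  have := hΩ_ge u hu γ
  rw [hΩ, sub_sub_cancel_left, norm_neg, hsq]
  linarith

end ProxDuality

section SupportedUnitBall

variable {ι : Type*} {s : Finset ι} {x : ι → ℝ}

def supportedUnitBall (s : Finset ι) : Set (ι → ℝ) :=
  {x | √(∑ m ∈ s, x m ^ 2) ≤ 1 ∧ ∀ m ∉ s, x m = 0}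

theorem zero_mem_supportedUnitBall : (0 : ι → ℝ) ∈ supportedUnitBall s := by
  simp [supportedUnitBall]

theorem convex_supportedUnitBall : Convex ℝ (supportedUnitBall s) := by
  rintro x ⟨hx, hx₀⟩ z ⟨hz, hz₀⟩ a b ha hb hab
  refine ⟨Real.sqrt_le_one.2 ?_, fun m hm => by simp [hx₀ m hm, hz₀ m hm]⟩
  rw [Real.sqrt_le_one] at hx hz
  calc ∑ m ∈ s, (a • x + b • z) m ^ 2 ≤ ∑ m ∈ s, (a * x m ^ 2 + b * z m ^ 2) := by
        refine sum_le_sum fun m _ => ?_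
        obtain rfl : a = 1 - b := by linarith
        simp only [Pi.add_apply, Pi.smul_apply, smul_eq_mul]
        nlinarith [mul_nonneg ha hb, sq_nonneg (x m - z m)]
    _ = a * ∑ m ∈ s, x m ^ 2 + b * ∑ m ∈ s, z m ^ 2 := by
        rw [sum_add_distrib, mul_sum, mul_sum]
    _ ≤ 1 := by nlinarith

theorem isCompact_supportedUnitBall : IsCompact (supportedUnitBall s) := by
  refine (isCompact_univ_pi fun _ => isCompact_Icc (a := (-1 : ℝ)) (b := 1)).of_isClosed_subset
    ?_ fun x hx m _ => ?_
  · simp only [supportedUnitBall, Set.ofPred_and, Set.ofPred_forall]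
    exact (isClosed_le (by fun_prop) continuous_const).inter
      (isClosed_iInter fun m => isClosed_iInter fun _ => isClosed_eq (continuous_apply m)
        continuous_const)
  · by_cases hm : m ∈ s
    · have hle : x m ^ 2 ≤ 1 :=
        (single_le_sum (fun i _ => sq_nonneg (x i)) hm).trans (Real.sqrt_le_one.1 hx.1)
      exact abs_le.1 (sq_le_one_iff_abs_le_one _ |>.1 hle)
    · simp [hx.2 m hm]

variable [Fintype ι]

theorem sum_mul_le_sqrt_of_mem_supportedUnitBall (hx : x ∈ supportedUnitBall s) (c : ι → ℝ) :
    ∑ m, x m * c m ≤ √(∑ m ∈ s, c m ^ 2) := by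
  rw [← sum_subset (subset_univ s) fun m _ hm => by rw [hx.2 m hm, zero_mul]]
  calc ∑ m ∈ s, x m * c m ≤ √(∑ m ∈ s, x m ^ 2) * √(∑ m ∈ s, c m ^ 2) :=
        Real.sum_mul_le_sqrt_mul_sqrt s x c
    _ ≤ √(∑ m ∈ s, c m ^ 2) := mul_le_of_le_one_left (Real.sqrt_nonneg _) hx.1

theorem exists_mem_supportedUnitBall_sum_mul_eq (s : Finset ι) (c : ι → ℝ) :
    ∃ x ∈ supportedUnitBall s, ∑ m, x m * c m = √(∑ m ∈ s, c m ^ 2) := by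
  classical
  set N := √(∑ m ∈ s, c m ^ 2)
  have hN : ∑ m ∈ s, c m ^ 2 = N ^ 2 := (Real.sq_sqrt (sum_nonneg fun m _ => sq_nonneg _)).symm
  -- `c / N` is the maximiser; when `N = 0` the junk value `c / 0 = 0` still works.
  refine ⟨fun m => if m ∈ s then c m / N else 0, ⟨?_, fun m hm => if_neg hm⟩, ?_⟩
  · rw [Real.sqrt_le_one]
    simp only [ite_pow, zero_pow two_ne_zero, sum_ite_mem, inter_self, div_pow, ← sum_div, hN]
    exact div_self_le_one _
  · simp only [ite_mul, zero_mul, sum_ite_mem, univ_inter]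
    calc ∑ m ∈ s, c m / N * c m = (∑ m ∈ s, c m ^ 2) / N := by
          rw [sum_div]; exact sum_congr rfl fun m _ => by ring
      _ = N := by rw [hN, sq, mul_self_div_self]

end SupportedUnitBall

section GroupNorm

variable {κ ι : Type*} (L : Finset κ) (g : κ → Finset ι) (W : κ → ι → ℝ)

def groupDualSet : Set (κ → ι → ℝ) := {a | ∀ ℓ ∈ L, a ℓ ∈ supportedUnitBall (g ℓ)}

theorem convex_groupDualSet : Convex ℝ (groupDualSet L g) :=
  fun _ ha _ hb _ _ hs ht hst ℓ hℓ => convex_supportedUnitBall (ha ℓ hℓ) (hb ℓ hℓ) hs ht hst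

def groupDualMap : (κ → ι → ℝ) →ₗ[ℝ] EuclideanSpace ℝ ι where
  toFun a := WithLp.toLp 2 fun j => ∑ ℓ ∈ L, W ℓ j * a ℓ j
  map_add' a b := by ext j; simp [mul_add, sum_add_distrib]
  map_smul' c a := by ext j; simp [mul_sum, mul_left_comm]

theorem continuous_groupDualMap : Continuous (groupDualMap L W) :=
  (PiLp.continuous_toLp 2 _).comp (by fun_prop)

noncomputable def groupPenalty (γ : EuclideanSpace ℝ ι) : ℝ :=
  ∑ ℓ ∈ L, √(∑ m ∈ g ℓ, (W ℓ m * γ m) ^ 2)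

theorem exists_forall_le_comp_groupDualMap (f : EuclideanSpace ℝ ι → ℝ) (hf : Continuous f) :
    ∃ â ∈ groupDualSet L g, ∀ a ∈ groupDualSet L g,
      f (groupDualMap L W â) ≤ f (groupDualMap L W a) := by
  classical
  set C : Set (κ → ι → ℝ) := Set.univ.pi fun ℓ => if ℓ ∈ L then supportedUnitBall (g ℓ) else {0}
  have hC : IsCompact C := isCompact_univ_pi fun ℓ => by
    split_ifs
    exacts [isCompact_supportedUnitBall, isCompact_singleton]
  have h0 : (0 : κ → ι → ℝ) ∈ C := fun ℓ _ => by
    by_cases hℓ : ℓ ∈ L <;> simp [hℓ, zero_mem_supportedUnitBall]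
  obtain ⟨â, hâ, hmin⟩ :=
    hC.exists_isMinOn ⟨0, h0⟩ (hf.comp (continuous_groupDualMap L W)).continuousOn
  refine ⟨â, fun ℓ hℓ => by simpa [hℓ] using hâ ℓ (Set.mem_univ ℓ), fun a ha => ?_⟩
  -- the dual map only sees the groups in `L`, so truncating `a` outside `L` lands in `C`
  set a' : κ → ι → ℝ := fun ℓ => if ℓ ∈ L then a ℓ else 0
  have ha' : a' ∈ C := fun ℓ _ => by by_cases hℓ : ℓ ∈ L <;> simp [a', hℓ, ha ℓ]
  have hmap : groupDualMap L W a' = groupDualMap L W a := by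
    ext j
    exact sum_congr rfl fun ℓ hℓ => by simp [a', hℓ]
  exact hmap ▸ hmin ha'

variable [Fintype ι]

theorem inner_groupDualMap (a : κ → ι → ℝ) (γ : EuclideanSpace ℝ ι) :
    ⟪groupDualMap L W a, γ⟫ = ∑ ℓ ∈ L, ∑ m, a ℓ m * (W ℓ m * γ m) := by
  simp only [groupDualMap, LinearMap.coe_mk, AddHom.coe_mk, PiLp.inner_apply, RCLike.inner_apply,
    conj_trivial]
  rw [sum_comm]
  refine sum_congr rfl fun m _ => ?_
  rw [mul_sum]
  exact sum_congr rfl fun ℓ _ => by ring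

theorem inner_groupDualMap_le {a : κ → ι → ℝ} (ha : a ∈ groupDualSet L g)
    (γ : EuclideanSpace ℝ ι) : ⟪groupDualMap L W a, γ⟫ ≤ groupPenalty L g W γ := by
  rw [inner_groupDualMap]
  exact sum_le_sum fun ℓ hℓ => sum_mul_le_sqrt_of_mem_supportedUnitBall (ha ℓ hℓ) _

theorem exists_inner_groupDualMap_eq (γ : EuclideanSpace ℝ ι) :
    ∃ a ∈ groupDualSet L g, ⟪groupDualMap L W a, γ⟫ = groupPenalty L g W γ := by
  choose a ha heq using fun ℓ => exists_mem_supportedUnitBall_sum_mul_eq (g ℓ) fun m => W ℓ m * γ m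
  exact ⟨a, fun ℓ _ => ha ℓ, by rw [inner_groupDualMap]; exact sum_congr rfl fun ℓ _ => heq ℓ⟩

theorem half_sq_add_le_of_groupDual_min {τ : ℝ} (hτ : 0 ≤ τ) (y : EuclideanSpace ℝ ι)
    {â : κ → ι → ℝ} (hâ : â ∈ groupDualSet L g)
    (hmin : ∀ a ∈ groupDualSet L g,
      ‖y - τ • groupDualMap L W â‖ ^ 2 ≤ ‖y - τ • groupDualMap L W a‖ ^ 2)
    (γ : EuclideanSpace ℝ ι) :
    1 / 2 * ‖y - τ • groupDualMap L W â - y‖ ^ 2 +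
        τ * groupPenalty L g W (y - τ • groupDualMap L W â) +
        1 / 2 * ‖γ - (y - τ • groupDualMap L W â)‖ ^ 2 ≤
      1 / 2 * ‖γ - y‖ ^ 2 + τ * groupPenalty L g W γ := by
  refine half_sq_add_le_of_nearest_of_support (y := y)
    ((convex_groupDualSet L g).linear_image (τ • groupDualMap L W))
    (Set.mem_image_of_mem _ hâ) ?_ (fun γ => τ * groupPenalty L g W γ) ?_ ?_ γ
  · rintro _ ⟨a, ha, rfl⟩
    exact (pow_le_pow_iff_left₀ (norm_nonneg _) (norm_nonneg _) two_ne_zero).1 (hmin a ha)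
  · rintro _ ⟨a, ha, rfl⟩ γ
    rw [LinearMap.smul_apply, real_inner_smul_left]
    exact mul_le_mul_of_nonneg_left (inner_groupDualMap_le L g W ha γ) hτ
  · intro γ
    obtain ⟨a, ha, h⟩ := exists_inner_groupDualMap_eq L g W γ
    exact ⟨_, ⟨a, ha, rfl⟩, by rw [LinearMap.smul_apply, real_inner_smul_left, h]⟩

end GroupNorm

theorem stmt_4_general (r : ℕ) (y : Fin r → ℝ) (τ : ℝ) (hτ : 0 < τ)
    (w : ℕ → ℕ → ℝ)
    (Wv : ℕ → Fin r → ℝ)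
    (hWv : ∀ (ℓ : ℕ) (m : Fin r), Wv ℓ m = if (m : ℕ) ≤ ℓ then w ℓ (m : ℕ) else 0)
    (Pobj : (Fin r → ℝ) → ℝ)
    (hP : ∀ γ : Fin r → ℝ, Pobj γ =
      (1 / 2) * ∑ j : Fin r, (γ j - y j) ^ 2
        + τ * ∑ ℓ ∈ Finset.range (r - 1),
            Real.sqrt (∑ m ∈ Finset.univ.filter (fun m : Fin r => (m : ℕ) ≤ ℓ),
              w ℓ (m : ℕ) ^ 2 * γ m ^ 2))
    (Dfeas : (ℕ → Fin r → ℝ) → Prop)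
    (hD : ∀ a : ℕ → Fin r → ℝ, Dfeas a ↔
      ∀ ℓ, ℓ < r - 1 →
        (Real.sqrt (∑ m ∈ Finset.univ.filter (fun m : Fin r => (m : ℕ) ≤ ℓ), a ℓ m ^ 2) ≤ 1
          ∧ ∀ m : Fin r, ℓ < (m : ℕ) → a ℓ m = 0))
    (G : (ℕ → Fin r → ℝ) → ℝ)
    (hG : ∀ a : ℕ → Fin r → ℝ, G a =
      ∑ j : Fin r, (y j - τ * ∑ ℓ ∈ Finset.range (r - 1), Wv ℓ j * a ℓ j) ^ 2) :
    (∃ ahat : ℕ → Fin r → ℝ, Dfeas ahat ∧ ∀ a, Dfeas a → G ahat ≤ G a) ∧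
    (∀ ahat : ℕ → Fin r → ℝ, Dfeas ahat → (∀ a, Dfeas a → G ahat ≤ G a) →
      (∀ γ : Fin r → ℝ,
        Pobj (fun j => y j - τ * ∑ ℓ ∈ Finset.range (r - 1), Wv ℓ j * ahat ℓ j) ≤ Pobj γ) ∧
      (∀ γ : Fin r → ℝ,
        Pobj γ ≤ Pobj (fun j => y j - τ * ∑ ℓ ∈ Finset.range (r - 1), Wv ℓ j * ahat ℓ j) →
        γ = fun j => y j - τ * ∑ ℓ ∈ Finset.range (r - 1), Wv ℓ j * ahat ℓ j)) := by
  set L := range (r - 1)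
  set g : ℕ → Finset (Fin r) := fun ℓ => univ.filter fun m => (m : ℕ) ≤ ℓ
  have hDfeas : ∀ a, Dfeas a ↔ a ∈ groupDualSet L g := fun a => by
    simp [hD, groupDualSet, supportedUnitBall, g, L]
  have hG' : ∀ a, G a = ‖WithLp.toLp 2 y - τ • groupDualMap L Wv a‖ ^ 2 := fun a => by
    simp [hG, EuclideanSpace.norm_sq_eq, groupDualMap]
  have hP' : ∀ γ, Pobj γ = 1 / 2 * ‖WithLp.toLp 2 γ - WithLp.toLp 2 y‖ ^ 2 +
      τ * groupPenalty L g Wv (WithLp.toLp 2 γ) := fun γ => by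
    have hpen : ∀ ℓ, ∑ m ∈ g ℓ, w ℓ m ^ 2 * γ m ^ 2 = ∑ m ∈ g ℓ, (Wv ℓ m * γ m) ^ 2 := fun ℓ =>
      sum_congr rfl fun m hm => by rw [hWv, if_pos (mem_filter.1 hm).2, mul_pow]
    simp only [hP, EuclideanSpace.norm_sq_eq, groupPenalty, ← hpen]
    simp [g]
  refine ⟨?_, fun â hâ hmin => ?_⟩
  · obtain ⟨â, hâ, hmin⟩ := exists_forall_le_comp_groupDualMap L g Wv
      (fun v => ‖WithLp.toLp 2 y - τ • v‖ ^ 2) (by fun_prop)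
    exact ⟨â, (hDfeas â).2 hâ, fun a ha => by rw [hG', hG']; exact hmin a ((hDfeas a).1 ha)⟩
  set γ₀ : Fin r → ℝ := fun j => y j - τ * ∑ ℓ ∈ L, Wv ℓ j * â ℓ j
  have hγ₀ : WithLp.toLp 2 γ₀ = WithLp.toLp 2 y - τ • groupDualMap L Wv â := by
    ext j
    simp [γ₀, groupDualMap]
  have hgrowth : ∀ γ, Pobj γ₀ + 1 / 2 * ‖WithLp.toLp 2 γ - WithLp.toLp 2 γ₀‖ ^ 2 ≤ Pobj γ := by
    intro γ
    have := half_sq_add_le_of_groupDual_min L g Wv hτ.le (WithLp.toLp 2 y) ((hDfeas â).1 hâ)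
      (fun a ha => by simpa only [hG'] using hmin a ((hDfeas a).2 ha)) (WithLp.toLp 2 γ)
    rw [hP', hP', hγ₀]
    linarith
  refine ⟨fun γ => ?_, fun γ hγ => ?_⟩
  · linarith [hgrowth γ, sq_nonneg ‖WithLp.toLp 2 γ - WithLp.toLp 2 γ₀‖]
  · have : ‖WithLp.toLp 2 γ - WithLp.toLp 2 γ₀‖ = 0 := by
      nlinarith [hgrowth γ, norm_nonneg (WithLp.toLp 2 γ - WithLp.toLp 2 γ₀)]
    exact WithLp.toLp_injective 2 (sub_eq_zero.1 (norm_eq_zero.1 this))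

/-- Primal/dual pair for the proximal operator of the hierarchical group
lasso penalty.  Coordinates of `ℝ^r` are 0-based: group `g_{ℓ+1}` of the paper is
`{m : (m:ℕ) ≤ ℓ}` for `ℓ ∈ {0,…,r−2}`, and `w ℓ m` is the (0-based) weight `w_{ℓ+1,m+1}`.
The dual problem attains its minimum, and for any dual minimizer `â`, the vector
`γ̂ = y − τ Σ_ℓ W^{(ℓ)} ∗ â^{(ℓ)}` is the unique minimizer of the primal problem
`γ ↦ (1/2)‖γ − y‖₂² + τ Σ_ℓ (Σ_{m ≤ ℓ} w_{ℓm}² γ_m²)^{1/2}`. -/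
theorem stmt_4 (r : ℕ) (hr : 2 ≤ r) (y : Fin r → ℝ) (τ : ℝ) (hτ : 0 < τ)
    (w : ℕ → ℕ → ℝ) (hw : ∀ ℓ m : ℕ, m ≤ ℓ → ℓ < r - 1 → 0 < w ℓ m)
    (Wv : ℕ → Fin r → ℝ)
    (hWv : ∀ (ℓ : ℕ) (m : Fin r), Wv ℓ m = if (m : ℕ) ≤ ℓ then w ℓ (m : ℕ) else 0)
    (Pobj : (Fin r → ℝ) → ℝ)
    (hP : ∀ γ : Fin r → ℝ, Pobj γ =
      (1 / 2) * ∑ j : Fin r, (γ j - y j) ^ 2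
        + τ * ∑ ℓ ∈ Finset.range (r - 1),
            Real.sqrt (∑ m ∈ Finset.univ.filter (fun m : Fin r => (m : ℕ) ≤ ℓ),
              w ℓ (m : ℕ) ^ 2 * γ m ^ 2))
    (Dfeas : (ℕ → Fin r → ℝ) → Prop)
    (hD : ∀ a : ℕ → Fin r → ℝ, Dfeas a ↔
      ∀ ℓ, ℓ < r - 1 →
        (Real.sqrt (∑ m ∈ Finset.univ.filter (fun m : Fin r => (m : ℕ) ≤ ℓ), a ℓ m ^ 2) ≤ 1
          ∧ ∀ m : Fin r, ℓ < (m : ℕ) → a ℓ m = 0))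
    (G : (ℕ → Fin r → ℝ) → ℝ)
    (hG : ∀ a : ℕ → Fin r → ℝ, G a =
      ∑ j : Fin r, (y j - τ * ∑ ℓ ∈ Finset.range (r - 1), Wv ℓ j * a ℓ j) ^ 2) :
    (∃ ahat : ℕ → Fin r → ℝ, Dfeas ahat ∧ ∀ a, Dfeas a → G ahat ≤ G a) ∧
    (∀ ahat : ℕ → Fin r → ℝ, Dfeas ahat → (∀ a, Dfeas a → G ahat ≤ G a) →
      (∀ γ : Fin r → ℝ,
        Pobj (fun j => y j - τ * ∑ ℓ ∈ Finset.range (r - 1), Wv ℓ j * ahat ℓ j) ≤ Pobj γ) ∧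
      (∀ γ : Fin r → ℝ,
        Pobj γ ≤ Pobj (fun j => y j - τ * ∑ ℓ ∈ Finset.range (r - 1), Wv ℓ j * ahat ℓ j) →
        γ = fun j => y j - τ * ∑ ℓ ∈ Finset.range (r - 1), Wv ℓ j * ahat ℓ j)) :=
  stmt_4_general r y τ hτ w Wv hWv Pobj hP Dfeas hD G hG
end

section
/- Let ℓ ≥ 1, z ∈ ℝ^ℓ, τ > 0, and let D = diag(w_1,…,w_ℓ) with all w_m > 0. Consider the problem of minimizing ‖z − τDa‖₂² over a ∈ ℝ^ℓ with ‖a‖₂ ≤ 1. (i) If ‖D^{−1}z‖₂ ≤ τ, then the minimizer is â = τ^{−1}D^{−1}z. (ii) If ‖D^{−1}z‖₂ > τ, then there is a unique ν̂ > 0 satisfying Σ_{m=1}^ℓ w_m² z_m²/(w_m² + ν̂)² = τ²; the minimizer is given by â_m = w_m z_m/(τ(w_m² + ν̂)) for each m, it satisfies ‖â‖₂ = 1, and ν̂ obeys the bounds [‖Dz‖₂/τ − max_m w_m²]_+ ≤ ν̂ ≤ ‖Dz‖₂/τ, where [x]_+ = max(x,0). -/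
/-!
If `‖D⁻¹z‖₂ ≤ τ`, the unconstrained minimizer `τ⁻¹D⁻¹z` is feasible and leaves zero residual.
Otherwise the minimizer lies on the sphere, and the stationarity condition
`τD(z − τDa) = ντ²a` forces `a = Dz / (τ(D² + ν))`; the constraint `‖a‖₂ = 1` becomes the
secular equation `f(ν) = τ²` for `f(ν) = Σ w_m²z_m²/(w_m² + ν)²`. On `[0, ∞)` the function `f`
is continuous and strictly decreasing, with `f(0) = ‖D⁻¹z‖₂² > τ²` and `f(ν) ≤ ‖Dz‖₂²/ν²`, so
it has exactly one positive root, and sandwiching `‖Dz‖₂²/(max w² + ν)² ≤ f(ν) ≤ ‖Dz‖₂²/ν²`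
at the root gives the bounds on `ν̂`. Optimality of a stationary point `b` on the sphere with
multiplier `ν ≥ 0` follows from the exact expansion
`‖z − τDa‖² = ‖z − τDb‖² + ντ²(‖b‖² − ‖a‖²) + ‖(ντ² + τ²D²)^{1/2}(b − a)‖²`.
-/

open Finset Set

section Stationary

variable {ι : Type*} [Fintype ι]

theorem sum_sq_sub_mul_le_of_stationary {z c a b : ι → ℝ} {μ : ℝ} (hμ : 0 ≤ μ)
    (hab : ∑ m, a m ^ 2 ≤ ∑ m, b m ^ 2) (hstat : ∀ m, c m * (z m - c m * b m) = μ * b m) :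
    ∑ m, (z m - c m * b m) ^ 2 ≤ ∑ m, (z m - c m * a m) ^ 2 := by
  have expand : ∀ m, (z m - c m * a m) ^ 2 = (z m - c m * b m) ^ 2
      + μ * (b m ^ 2 - a m ^ 2) + (μ + c m ^ 2) * (b m - a m) ^ 2 := fun m => by
    linear_combination (2 * (b m - a m)) * hstat m
  have hrest : 0 ≤ ∑ m, (μ + c m ^ 2) * (b m - a m) ^ 2 :=
    sum_nonneg fun m _ => by positivity
  have hgap : 0 ≤ μ * (∑ m, b m ^ 2 - ∑ m, a m ^ 2) := mul_nonneg hμ (sub_nonneg.2 hab)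
  calc ∑ m, (z m - c m * b m) ^ 2
      ≤ ∑ m, (z m - c m * b m) ^ 2 + μ * (∑ m, b m ^ 2 - ∑ m, a m ^ 2)
        + ∑ m, (μ + c m ^ 2) * (b m - a m) ^ 2 := by linarith
    _ = ∑ m, (z m - c m * a m) ^ 2 := by
      simp only [expand, sum_add_distrib, mul_sub, mul_sum, sum_sub_distrib]

end Stationary

section Secular

variable {ι : Type*} [Fintype ι] {w z : ι → ℝ}

/-- For the stationary point `a = Dz / (τ(D² + ν))` with multiplier `ν`, the constraint
`‖a‖₂ = 1` reads `secular w z ν = τ²`. -/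
noncomputable def secular (w z : ι → ℝ) (ν : ℝ) : ℝ :=
  ∑ m, w m ^ 2 * z m ^ 2 / (w m ^ 2 + ν) ^ 2

theorem secular_eq_sum_sq (ν : ℝ) :
    secular w z ν = ∑ m, (w m * z m / (w m ^ 2 + ν)) ^ 2 := by
  simp only [secular, div_pow, mul_pow]

theorem secular_zero (hw : ∀ m, w m ≠ 0) : secular w z 0 = ∑ m, (z m / w m) ^ 2 := by
  refine sum_congr rfl fun m _ => ?_
  have := hw m
  field_simp
  ring

theorem continuousOn_secular (hw : ∀ m, w m ≠ 0) : ContinuousOn (secular w z) (Ici 0) := by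
  refine continuousOn_finsetSum _ fun m _ => continuousOn_const.div (by fun_prop) ?_
  intro ν (hν : 0 ≤ ν)
  have := hw m
  positivity

theorem secular_strictAntiOn (hw : ∀ m, w m ≠ 0) (hz : ∃ m, z m ≠ 0) :
    StrictAntiOn (secular w z) (Ici 0) := by
  intro ν₁ (h₁ : 0 ≤ ν₁) ν₂ _ h₁₂
  obtain ⟨m₀, hm₀⟩ := hz
  refine sum_lt_sum (fun m _ => ?_) ⟨m₀, mem_univ _, ?_⟩
  · have := hw m
    gcongr
  · have := hw m₀
    gcongr

theorem secular_le_sum_div_sq {ν : ℝ} (hν : 0 < ν) :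
    secular w z ν ≤ (∑ m, (w m * z m) ^ 2) / ν ^ 2 := by
  rw [sum_div]
  refine sum_le_sum fun m _ => ?_
  rw [mul_pow]
  gcongr
  linarith [sq_nonneg (w m)]

theorem sum_div_sq_le_secular {ν W : ℝ} (hν : 0 < ν) (hW : ∀ m, w m ^ 2 ≤ W) :
    (∑ m, (w m * z m) ^ 2) / (W + ν) ^ 2 ≤ secular w z ν := by
  rw [sum_div]
  refine sum_le_sum fun m _ => ?_
  rw [mul_pow]
  gcongr
  exact hW m

theorem exists_secular_eq {τ : ℝ} (hw : ∀ m, w m ≠ 0) (hz : ∃ m, z m ≠ 0) (hτ : 0 < τ)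
    (h : τ ^ 2 < ∑ m, (z m / w m) ^ 2) : ∃ ν, 0 < ν ∧ secular w z ν = τ ^ 2 := by
  set S := ∑ m, (w m * z m) ^ 2
  have hS : 0 < S := by
    obtain ⟨m₀, hm₀⟩ := hz
    have := hw m₀
    exact sum_pos' (fun m _ => sq_nonneg _) ⟨m₀, mem_univ _, by positivity⟩
  set M := Real.sqrt S / τ
  have hM : 0 < M := by positivity
  have hfM : secular w z M ≤ τ ^ 2 := by
    calc secular w z M ≤ S / M ^ 2 := secular_le_sum_div_sq hM
      _ = τ ^ 2 := by simp only [M, div_pow, Real.sq_sqrt hS.le]; field_simp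
  have hf0 : τ ^ 2 ≤ secular w z 0 := (secular_zero hw).symm ▸ h.le
  obtain ⟨ν, ⟨hν₀, -⟩, hν⟩ := intermediate_value_Icc' hM.le
    ((continuousOn_secular hw).mono Icc_subset_Ici_self) ⟨hfM, hf0⟩
  refine ⟨ν, hν₀.lt_of_ne ?_, hν⟩
  rintro rfl
  rw [secular_zero hw] at hν
  exact h.ne' hν

theorem sqrt_div_sub_le_of_secular_eq [Nonempty ι] {τ ν W : ℝ} (hτ : 0 < τ) (hν : 0 < ν)
    (hW : ∀ m, w m ^ 2 ≤ W) (hroot : secular w z ν = τ ^ 2) :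
    Real.sqrt (∑ m, (w m * z m) ^ 2) / τ - W ≤ ν := by
  have hWν : 0 < W + ν := by
    linarith [(sq_nonneg _).trans (hW (Classical.arbitrary ι))]
  have hS : ∑ m, (w m * z m) ^ 2 ≤ (τ * (W + ν)) ^ 2 := by
    have := hroot ▸ sum_div_sq_le_secular hν hW
    rwa [div_le_iff₀ (by positivity), ← mul_pow] at this
  rw [sub_le_iff_le_add, div_le_iff₀ hτ, Real.sqrt_le_left (mul_pos (by linarith) hτ).le]
  linarith

theorem le_sqrt_div_of_secular_eq {τ ν : ℝ} (hτ : 0 < τ) (hν : 0 < ν)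
    (hroot : secular w z ν = τ ^ 2) : ν ≤ Real.sqrt (∑ m, (w m * z m) ^ 2) / τ := by
  have hS : (τ * ν) ^ 2 ≤ ∑ m, (w m * z m) ^ 2 := by
    have := hroot ▸ secular_le_sum_div_sq hν
    rwa [le_div_iff₀ (by positivity), ← mul_pow] at this
  rw [le_div_iff₀ hτ, mul_comm]
  exact Real.le_sqrt_of_sq_le hS

theorem sum_sq_eq_one_of_secular_eq {τ ν : ℝ} (hτ : 0 < τ) (hroot : secular w z ν = τ ^ 2) :
    ∑ m, (w m * z m / (τ * (w m ^ 2 + ν))) ^ 2 = 1 := by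
  simp only [div_mul_eq_div_div_swap, div_pow _ τ, ← sum_div, ← secular_eq_sum_sq, hroot]
  exact div_self (by positivity)

theorem sum_sq_sub_le_of_secular_eq {τ ν : ℝ} {a : ι → ℝ} (hw : ∀ m, w m ≠ 0) (hτ : 0 < τ)
    (hν : 0 ≤ ν) (hroot : secular w z ν = τ ^ 2) (ha : ∑ m, a m ^ 2 ≤ 1) :
    ∑ m, (z m - τ * w m * (w m * z m / (τ * (w m ^ 2 + ν)))) ^ 2
      ≤ ∑ m, (z m - τ * w m * a m) ^ 2 := by
  refine sum_sq_sub_mul_le_of_stationary (μ := ν * τ ^ 2) (by positivity)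
    (ha.trans (sum_sq_eq_one_of_secular_eq hτ hroot).ge) fun m => ?_
  have := hw m
  have : w m ^ 2 + ν ≠ 0 := by positivity
  field_simp
  ring

end Secular

/-- elliptical projection.  Minimize `‖z − τ D a‖₂²` over `‖a‖₂ ≤ 1` with
`D = diag(w₁,…,w_ℓ)`, `w_m > 0`, `τ > 0`.
(i) If `‖D⁻¹z‖₂ ≤ τ` the minimizer is `â = τ⁻¹D⁻¹z`.
(ii) If `‖D⁻¹z‖₂ > τ` there is a unique `ν̂ > 0` with `Σ_m w_m²z_m²/(w_m²+ν̂)² = τ²`; the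
minimizer is `â_m = w_m z_m/(τ(w_m²+ν̂))`, it has `‖â‖₂ = 1`, and
`[‖Dz‖₂/τ − max_m w_m²]₊ ≤ ν̂ ≤ ‖Dz‖₂/τ`. -/
theorem stmt_6 (l : ℕ) (hl : 1 ≤ l) (z : Fin l → ℝ) (τ : ℝ) (hτ : 0 < τ)
    (w : Fin l → ℝ) (hw : ∀ m : Fin l, 0 < w m) :
    ((Real.sqrt (∑ m : Fin l, (z m / w m) ^ 2) ≤ τ) →
      (Real.sqrt (∑ m : Fin l, (z m / (τ * w m)) ^ 2) ≤ 1 ∧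
       ∀ a : Fin l → ℝ, Real.sqrt (∑ m : Fin l, a m ^ 2) ≤ 1 →
         ∑ m : Fin l, (z m - τ * w m * (z m / (τ * w m))) ^ 2
           ≤ ∑ m : Fin l, (z m - τ * w m * a m) ^ 2)) ∧
    ((τ < Real.sqrt (∑ m : Fin l, (z m / w m) ^ 2)) →
      ∃ ν : ℝ, 0 < ν ∧
        (∑ m : Fin l, w m ^ 2 * z m ^ 2 / (w m ^ 2 + ν) ^ 2 = τ ^ 2) ∧
        (∀ ν' : ℝ, 0 < ν' →
          (∑ m : Fin l, w m ^ 2 * z m ^ 2 / (w m ^ 2 + ν') ^ 2 = τ ^ 2) → ν' = ν) ∧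
        (Real.sqrt (∑ m : Fin l, (w m * z m / (τ * (w m ^ 2 + ν))) ^ 2) = 1) ∧
        (∀ a : Fin l → ℝ, Real.sqrt (∑ m : Fin l, a m ^ 2) ≤ 1 →
          ∑ m : Fin l, (z m - τ * w m * (w m * z m / (τ * (w m ^ 2 + ν)))) ^ 2
            ≤ ∑ m : Fin l, (z m - τ * w m * a m) ^ 2) ∧
        max (Real.sqrt (∑ m : Fin l, (w m * z m) ^ 2) / τ
              - Finset.univ.sup' ⟨⟨0, hl⟩, Finset.mem_univ _⟩ (fun m : Fin l => w m ^ 2)) 0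
          ≤ ν ∧
        ν ≤ Real.sqrt (∑ m : Fin l, (w m * z m) ^ 2) / τ) := by
  have hw₀ : ∀ m, w m ≠ 0 := fun m => (hw m).ne'
  refine ⟨fun h => ⟨?_, fun a _ => ?_⟩, fun h => ?_⟩
  · simp only [Real.sqrt_le_one, mul_comm τ, ← div_div, div_pow _ τ, ← sum_div]
    rw [div_le_one (by positivity), ← Real.sqrt_le_left hτ.le]
    exact h
  · have hres : ∀ m, z m - τ * w m * (z m / (τ * w m)) = 0 := fun m => by
      rw [mul_div_cancel₀ _ (mul_ne_zero hτ.ne' (hw₀ m)), sub_self]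
    simp only [hres, zero_pow two_ne_zero, sum_const_zero]
    positivity
  have hτS : τ ^ 2 < ∑ m, (z m / w m) ^ 2 := (Real.lt_sqrt hτ.le).mp h
  have hz : ∃ m, z m ≠ 0 := by
    obtain ⟨m, -, hm⟩ := exists_ne_zero_of_sum_ne_zero (hτS.trans_le' (sq_nonneg τ)).ne'
    exact ⟨m, fun h0 => hm (by simp [h0])⟩
  obtain ⟨ν, hν, hroot⟩ := exists_secular_eq hw₀ hz hτ hτS
  have : Nonempty (Fin l) := ⟨⟨0, hl⟩⟩
  have hW : ∀ m, w m ^ 2 ≤ univ.sup' ⟨⟨0, hl⟩, mem_univ _⟩ (fun m : Fin l => w m ^ 2) :=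
    fun m => le_sup' (fun m : Fin l => w m ^ 2) (mem_univ m)
  refine ⟨ν, hν, hroot,
    fun ν' hν' hroot' => (secular_strictAntiOn hw₀ hz).injOn hν'.le hν.le (hroot'.trans hroot.symm),
    by rw [sum_sq_eq_one_of_secular_eq hτ hroot, Real.sqrt_one],
    fun a ha => sum_sq_sub_le_of_secular_eq hw₀ hτ hν.le hroot (Real.sqrt_le_one.mp ha),
    max_le (sqrt_div_sub_le_of_secular_eq hτ hν hW hroot) hν.le,
    le_sqrt_div_of_secular_eq hτ hν hroot⟩
end

section
/- Let λ > 0, X ∈ ℝ^{n×p}, 2 ≤ r ≤ p, and weights w_{ℓm} > 0. A vector β̂ ∈ ℝ^r with β̂_r > 0 is a minimizer of the r-th row subproblem if and only if there exist vectors a^{(ℓ)} ∈ ℝ^r for ℓ = 1,…,r−1 such that: −(2/β̂_r)e_r + (2/n)X_{1:r}ᵀX_{1:r}β̂ + λ·Σ_{ℓ=1}^{r−1} W^{(ℓ)}∗a^{(ℓ)} = 0, where (a^{(ℓ)})_m = 0 for all m > ℓ; (a^{(ℓ)})_{g_ℓ} = (W^{(ℓ)}∗β̂)_{g_ℓ}/‖(W^{(ℓ)}∗β̂)_{g_ℓ}‖₂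 whenever β̂_{g_ℓ} ≠ 0; and ‖(a^{(ℓ)})_{g_ℓ}‖₂ ≤ 1 whenever β̂_{g_ℓ} = 0. Here e_r ∈ ℝ^r is the r-th standard basis vector, g_ℓ = {1,…,ℓ}, W^{(ℓ)} ∈ ℝ^r has m-th entry w_{ℓm} for m ≤ ℓ and 0 otherwise, and ∗ is the entrywise product. -/
open Matrix Finset Filter Topology RealInnerProductSpace ContinuousLinearMap

/-!
`F_r` is the smooth convex function `-2 log β_r + ‖X_{1:r} β‖² / n` plus `λ` times a sum of
seminorms `‖W^{(ℓ)} ∗ β‖`, and the conditions say that `0` lies in the subdifferential of `F_r`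
at `β̂`. Sufficiency is the sum of the subgradient inequalities of the terms. For necessity, the
one-sided derivative of `F_r` at `β̂` is nonnegative in every direction `v`; after subtracting
the gradient of the smooth part and of the groups with `W^{(ℓ)} ∗ β̂ ≠ 0`, this leaves a vector `u`
with `⟪u, v⟫ ≤ ∑_{ℓ : W^{(ℓ)} ∗ β̂ = 0} ‖W^{(ℓ)} ∗ v‖` for all `v`, and separating `u` from the
compact convex set `{∑_ℓ W^{(ℓ)} ∗ b_ℓ : ‖b_ℓ‖ ≤ 1}` shows that `u` lies in it.
-/

section GroupNorm

variable {E F : Type*} [NormedAddCommGroup E] [InnerProductSpace ℝ E]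
  [NormedAddCommGroup F] [InnerProductSpace ℝ F]

theorem norm_inv_norm_smul_le_one (y : F) : ‖‖y‖⁻¹ • y‖ ≤ 1 := by
  rw [norm_smul, norm_inv, norm_norm]
  exact inv_mul_le_one_of_le₀ le_rfl (norm_nonneg y)

theorem real_inner_inv_norm_smul_self (y : F) : ⟪‖y‖⁻¹ • y, y⟫ = ‖y‖ := by
  rw [real_inner_smul_left, real_inner_self_eq_norm_sq]
  rcases eq_or_ne ‖y‖ 0 with h | h
  · simp [h]
  · field_simp

theorem IsLocalMinOn.hasDerivWithinAt_Ici_nonneg {φ : ℝ → ℝ} {a d : ℝ}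
    (h : IsLocalMinOn φ (Set.Ici a) a) (hφ : HasDerivWithinAt φ d (Set.Ici a) a) : 0 ≤ d := by
  have h1 : (1 : ℝ) ∈ posTangentConeAt (Set.Ici a) a :=
    mem_posTangentConeAt_of_segment_subset <| by
      rw [segment_eq_Icc (by linarith)]
      exact Set.Icc_subset_Ici_self
  simpa using h.hasFDerivWithinAt_nonneg hφ.hasFDerivWithinAt h1

open scoped Classical in
theorem hasDerivWithinAt_norm_add_smul (y z : F) :
    HasDerivWithinAt (fun t : ℝ => ‖y + t • z‖) (if y = 0 then ‖z‖ else ⟪y, z⟫ / ‖y‖)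
      (Set.Ici 0) 0 := by
  split_ifs with hy
  · subst hy
    refine (((hasDerivAt_id (0 : ℝ)).mul_const ‖z‖).hasDerivWithinAt.congr (fun t ht => ?_)
      (by simp)).congr_deriv (one_mul _)
    simp [norm_smul, abs_of_nonneg (Set.mem_Ici.1 ht)]
  · have hsq : HasDerivAt (fun t : ℝ => ‖y + t • z‖ ^ 2) (2 * ⟪y, z⟫) 0 := by
      simpa using (((hasDerivAt_id (0 : ℝ)).smul_const z).const_add y).norm_sq
    refine ((hsq.sqrt (by simpa using hy)).hasDerivWithinAt.congr (fun t _ => ?_) ?_).congr_deriv ?_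
    · exact (Real.sqrt_sq (norm_nonneg _)).symm
    · exact (Real.sqrt_sq (norm_nonneg _)).symm
    · simp only [zero_smul, add_zero, Real.sqrt_sq (norm_nonneg _)]
      field_simp

theorem exists_sum_adjoint_eq_of_inner_le_sum_norm {ι : Type*} [CompleteSpace E] [ProperSpace F]
    (s : Finset ι) (A : ι → E →L[ℝ] F) {u : E} (hu : ∀ v, ⟪u, v⟫ ≤ ∑ i ∈ s, ‖A i v‖) :
    ∃ b : ι → F, (∀ i, ‖b i‖ ≤ 1) ∧ ∑ i ∈ s, adjoint (A i) (b i) = u := by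
  let ϕ : (ι → F) →L[ℝ] E := ∑ i ∈ s, (adjoint (A i)).comp (proj i)
  have hϕ : ∀ b, ϕ b = ∑ i ∈ s, adjoint (A i) (b i) := fun b => by simp [ϕ]
  let S : Set (ι → F) := Set.univ.pi fun _ => Metric.closedBall 0 1
  have hK : IsCompact (ϕ '' S) :=
    (isCompact_univ_pi fun _ => isCompact_closedBall 0 1).image ϕ.continuous
  have hKc : Convex ℝ (ϕ '' S) :=
    (convex_pi fun _ _ => convex_closedBall 0 1).linear_image ϕ.toLinearMap
  suffices hu' : u ∈ ϕ '' S by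
    obtain ⟨b, hb, rfl⟩ := hu'
    exact ⟨b, fun i => by simpa using hb i (Set.mem_univ i), (hϕ b).symm⟩
  by_contra hu'
  obtain ⟨f, c, hfK, hfu⟩ := geometric_hahn_banach_closed_point hKc hK.isClosed hu'
  set v := (InnerProductSpace.toDual ℝ E).symm f
  -- `f = ⟪v, ·⟫` attains `∑ i ∈ s, ‖A i v‖ ≥ ⟪v, u⟫ = f u` on `ϕ '' S`
  let b : ι → F := fun i => ‖A i v‖⁻¹ • A i v
  have hb : b ∈ S := fun i _ => by simpa using norm_inv_norm_smul_le_one (A i v)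
  have hfb : f (ϕ b) = ∑ i ∈ s, ‖A i v‖ := by
    rw [← InnerProductSpace.toDual_symm_apply, hϕ, inner_sum]
    refine sum_congr rfl fun i _ => ?_
    rw [adjoint_inner_right, real_inner_comm, real_inner_inv_norm_smul_self]
  have hfu' : f u = ⟪u, v⟫ := by rw [← InnerProductSpace.toDual_symm_apply, real_inner_comm]
  linarith [hfK _ ⟨b, hb, rfl⟩, hu v]

end GroupNorm

section GroupLassoOptimality

variable {ι E F : Type*} [NormedAddCommGroup E] [InnerProductSpace ℝ E]
  [NormedAddCommGroup F] [InnerProductSpace ℝ F]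
  {f : E → ℝ} {g x : E} {U : Set E} {s : Finset ι} {D : ι → E →L[ℝ] F} {lam : ℝ}

theorem isMinOn_add_sum_norm_of_subgradient [CompleteSpace E] [CompleteSpace F] (hlam : 0 ≤ lam)
    (hf : ∀ y ∈ U, f x + ⟪g, y - x⟫ ≤ f y) (a : ι → F)
    (hstat : g + lam • ∑ i ∈ s, adjoint (D i) (a i) = 0)
    (hnorm : ∀ i ∈ s, ‖a i‖ ≤ 1) (halign : ∀ i ∈ s, ⟪a i, D i x⟫ = ‖D i x‖) :
    IsMinOn (fun y => f y + lam * ∑ i ∈ s, ‖D i y‖) U x := by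
  intro y hy
  have hgroup : ∀ i ∈ s, ⟪a i, D i (y - x)⟫ ≤ ‖D i y‖ - ‖D i x‖ := fun i hi => by
    rw [map_sub, inner_sub_right, halign i hi]
    have := (real_inner_le_norm (a i) (D i y)).trans
      (mul_le_of_le_one_left (norm_nonneg _) (hnorm i hi))
    linarith
  have h0 : ⟪g, y - x⟫ + lam * ∑ i ∈ s, ⟪a i, D i (y - x)⟫ = 0 := by
    have := congrArg (⟪·, y - x⟫) hstat
    simp only [inner_add_left, real_inner_smul_left, sum_inner, adjoint_inner_left,
      inner_zero_left] at this
    simpa only [real_inner_comm (a _)] using this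
  have := mul_le_mul_of_nonneg_left (sum_le_sum hgroup) hlam
  rw [sum_sub_distrib, mul_sub] at this
  show f x + lam * ∑ i ∈ s, ‖D i x‖ ≤ f y + lam * ∑ i ∈ s, ‖D i y‖
  linarith [hf y hy]

open scoped Classical in
theorem inner_add_sum_nonneg_of_isMinOn (hU : U ∈ 𝓝 x)
    (hfg : ∀ v, HasDerivAt (fun t : ℝ => f (x + t • v)) ⟪g, v⟫ 0)
    (hmin : IsMinOn (fun y => f y + lam * ∑ i ∈ s, ‖D i y‖) U x) (v : E) :
    0 ≤ ⟪g, v⟫ + lam * ∑ i ∈ s, (if D i x = 0 then ‖D i v‖ else ⟪D i x, D i v⟫ / ‖D i x‖) := by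
  have hderiv : HasDerivWithinAt (fun t : ℝ => f (x + t • v) + lam * ∑ i ∈ s, ‖D i x + t • D i v‖)
      (⟪g, v⟫ + lam * ∑ i ∈ s, (if D i x = 0 then ‖D i v‖ else ⟪D i x, D i v⟫ / ‖D i x‖))
      (Set.Ici 0) 0 :=
    (hfg v).hasDerivWithinAt.add <|
      (HasDerivWithinAt.fun_sum fun i _ => hasDerivWithinAt_norm_add_smul _ _).const_mul lam
  refine IsLocalMinOn.hasDerivWithinAt_Ici_nonneg ?_ hderiv
  have hline : Tendsto (fun t : ℝ => x + t • v) (𝓝 0) (𝓝 x) := by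
    have : Continuous fun t : ℝ => x + t • v := by fun_prop
    simpa using this.tendsto' 0 x (by simp)
  filter_upwards [nhdsWithin_le_nhds (hline.eventually hU)] with t ht
  simpa using hmin ht

theorem exists_subgradient_of_isMinOn [CompleteSpace E] [ProperSpace F] (hlam : 0 < lam)
    (hU : U ∈ 𝓝 x) (hfg : ∀ v, HasDerivAt (fun t : ℝ => f (x + t • v)) ⟪g, v⟫ 0)
    (hmin : IsMinOn (fun y => f y + lam * ∑ i ∈ s, ‖D i y‖) U x) :
    ∃ a : ι → F, g + lam • ∑ i ∈ s, adjoint (D i) (a i) = 0 ∧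
      (∀ i, D i x ≠ 0 → a i = ‖D i x‖⁻¹ • D i x) ∧ ∀ i, ‖a i‖ ≤ 1 := by
  classical
  let a₀ : ι → F := fun i => ‖D i x‖⁻¹ • D i x
  let u : E := -(lam⁻¹ • (g + lam • ∑ i ∈ s, adjoint (D i) (a₀ i)))
  have hu : ∀ v, ⟪u, v⟫ ≤ ∑ i ∈ s with D i x = 0, ‖D i v‖ := fun v => by
    have key := inner_add_sum_nonneg_of_isMinOn hU hfg hmin v
    have hsplit : ∀ i, (if D i x = 0 then ‖D i v‖ else ⟪D i x, D i v⟫ / ‖D i x‖)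
        = ⟪a₀ i, D i v⟫ + if D i x = 0 then ‖D i v‖ else 0 := fun i => by
      split_ifs with h
      · simp [a₀, h]
      · simp [a₀, real_inner_smul_left, div_eq_inv_mul]
    simp only [hsplit, sum_add_distrib, ← sum_filter] at key
    have hu_eq : ⟪u, v⟫ = -(lam⁻¹ * (⟪g, v⟫ + lam * ∑ i ∈ s, ⟪a₀ i, D i v⟫)) := by
      simp only [u, inner_neg_left, inner_add_left, real_inner_smul_left, sum_inner,
        adjoint_inner_left]
    rw [hu_eq]
    have h := mul_nonneg (inv_pos.2 hlam).le key
    field_simp at h ⊢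
    linarith
  obtain ⟨b, hb1, hb⟩ := exists_sum_adjoint_eq_of_inner_le_sum_norm _ D hu
  refine ⟨fun i => if D i x = 0 then b i else a₀ i, ?_, fun i hi => if_neg hi, fun i => ?_⟩
  · have hsplit : ∀ i, adjoint (D i) (if D i x = 0 then b i else a₀ i)
        = adjoint (D i) (a₀ i) + if D i x = 0 then adjoint (D i) (b i) else 0 := fun i => by
      split_ifs with h
      · simp [a₀, h]
      · simp
    simp only [hsplit, sum_add_distrib, ← sum_filter, hb, u, smul_add, smul_neg, smul_smul,
      mul_inv_cancel_left₀ hlam.ne', mul_inv_cancel₀ hlam.ne', one_smul]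
    abel
  · dsimp only
    split_ifs
    · exact hb1 i
    · exact norm_inv_norm_smul_le_one _

theorem isMinOn_add_sum_norm_iff [CompleteSpace E] [ProperSpace F] (hlam : 0 < lam)
    (hU : U ∈ 𝓝 x) (hfg : ∀ v, HasDerivAt (fun t : ℝ => f (x + t • v)) ⟪g, v⟫ 0)
    (hf : ∀ y ∈ U, f x + ⟪g, y - x⟫ ≤ f y) :
    IsMinOn (fun y => f y + lam * ∑ i ∈ s, ‖D i y‖) U x ↔
      ∃ a : ι → F, g + lam • ∑ i ∈ s, adjoint (D i) (a i) = 0 ∧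
        (∀ i ∈ s, D i x ≠ 0 → a i = ‖D i x‖⁻¹ • D i x) ∧ (∀ i ∈ s, D i x = 0 → ‖a i‖ ≤ 1) := by
  refine ⟨fun hmin => ?_, fun ⟨a, hstat, halign, hbound⟩ => ?_⟩
  · obtain ⟨a, hstat, halign, hbound⟩ := exists_subgradient_of_isMinOn hlam hU hfg hmin
    exact ⟨a, hstat, fun i _ => halign i, fun i _ _ => hbound i⟩
  · refine isMinOn_add_sum_norm_of_subgradient hlam.le hf a hstat (fun i hi => ?_) (fun i hi => ?_)
    · by_cases h : D i x = 0
      · exact hbound i hi h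
      · rw [halign i hi h]
        exact norm_inv_norm_smul_le_one _
    · by_cases h : D i x = 0
      · simp [h]
      · rw [halign i hi h, real_inner_inv_norm_smul_self]

end GroupLassoOptimality

section GroupOperator

variable {κ : Type*} [Fintype κ] {p : κ → Prop} [DecidablePred p]

theorem real_inner_toLp_left (G : κ → ℝ) (v : EuclideanSpace ℝ κ) :
    ⟪WithLp.toLp 2 G, v⟫ = G ⬝ᵥ WithLp.ofLp v := by
  simp [EuclideanSpace.inner_eq_star_dotProduct, dotProduct_comm]

theorem sqrt_sum_filter_sq_le_norm (y : EuclideanSpace ℝ κ) :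
    √(∑ m ∈ univ.filter p, y m ^ 2) ≤ ‖y‖ := by
  rw [← Real.sqrt_sq (norm_nonneg y), EuclideanSpace.real_norm_sq_eq]
  exact Real.sqrt_le_sqrt (sum_le_sum_of_subset_of_nonneg (filter_subset _ _)
    fun m _ _ => sq_nonneg _)

theorem norm_eq_sqrt_sum_filter_sq {y : EuclideanSpace ℝ κ} (hy : ∀ m, ¬p m → y m = 0) :
    ‖y‖ = √(∑ m ∈ univ.filter p, y m ^ 2) := by
  rw [← Real.sqrt_sq (norm_nonneg y), EuclideanSpace.real_norm_sq_eq, sum_filter]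
  refine congrArg _ (sum_congr rfl fun m _ => ?_)
  split_ifs with hm
  · rfl
  · simp [hy m hm]

variable [DecidableEq κ] (p) (ω : κ → ℝ)

/-- The paper's `y ↦ W^{(ℓ)} ∗ y` for the group `g_ℓ = {m | p m}` with weights `ω`. -/
noncomputable def groupOp : EuclideanSpace ℝ κ →L[ℝ] EuclideanSpace ℝ κ :=
  toEuclideanCLM (𝕜 := ℝ) (n := κ) (diagonal fun m => if p m then ω m else 0)

variable {p ω}

@[simp]
theorem groupOp_apply (y : EuclideanSpace ℝ κ) (m : κ) :
    groupOp p ω y m = (if p m then ω m else 0) * y m := by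
  simp [groupOp, mulVec_diagonal]

theorem adjoint_groupOp : adjoint (groupOp p ω) = groupOp p ω := by
  rw [groupOp, ← star_eq_adjoint, ← map_star, star_eq_conjTranspose, diagonal_conjTranspose,
    star_trivial]

theorem norm_groupOp (y : EuclideanSpace ℝ κ) :
    ‖groupOp p ω y‖ = √(∑ m ∈ univ.filter p, (ω m * y m) ^ 2) := by
  rw [norm_eq_sqrt_sum_filter_sq (p := p) fun m hm => by simp [hm]]
  refine congrArg _ (sum_congr rfl fun m hm => ?_)
  simp [(mem_filter.1 hm).2]

theorem groupOp_eq_zero_iff (hω : ∀ m, p m → ω m ≠ 0) {y : EuclideanSpace ℝ κ} :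
    groupOp p ω y = 0 ↔ ∀ m, p m → y m = 0 := by
  refine ⟨fun h m hm => ?_, fun h => ?_⟩
  · simpa [hm, hω m hm] using congrArg (· m) h
  · ext m
    by_cases hm : p m <;> simp [hm, h m]

theorem inv_norm_smul_groupOp_apply (β : EuclideanSpace ℝ κ) (m : κ) :
    (‖groupOp p ω β‖⁻¹ • groupOp p ω β) m
      = if p m then ω m * β m / √(∑ m' ∈ univ.filter p, (ω m' * β m') ^ 2) else 0 := by
  by_cases hm : p m <;> simp [hm, norm_groupOp, div_eq_inv_mul]

variable {ι : Type*} {p : ι → κ → Prop} [∀ i, DecidablePred (p i)] {ω : ι → κ → ℝ}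

theorem toLp_add_smul_sum_adjoint_groupOp_apply (G : κ → ℝ) (lam : ℝ) (s : Finset ι)
    (a : ι → EuclideanSpace ℝ κ) (j : κ) :
    (WithLp.toLp 2 G + lam • ∑ i ∈ s, adjoint (groupOp (p i) (ω i)) (a i)) j
      = G j + lam * ∑ i ∈ s, (if p i j then ω i j else 0) * a i j := by
  simp [adjoint_groupOp]

end GroupOperator

section RowLoss

variable {n : ℕ} {κ : Type*} [Fintype κ] (A : Matrix (Fin n) κ ℝ)

theorem transpose_mul_self_mulVec_dotProduct (β v : κ → ℝ) :
    (Aᵀ * A) *ᵥ β ⬝ᵥ v = A *ᵥ β ⬝ᵥ A *ᵥ v := by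
  rw [← mulVec_mulVec, mulVec_transpose, ← dotProduct_mulVec]

variable (k : κ)

noncomputable def rowLoss (β : κ → ℝ) : ℝ :=
  -2 * Real.log (β k) + (1 / (n : ℝ)) * ∑ i : Fin n, (A.mulVec β i) ^ 2

variable [DecidableEq κ]

/-- The gradient of `rowLoss`, written as in the stationarity condition of the theorem. -/
noncomputable def rowLossGrad (β : κ → ℝ) : κ → ℝ := fun j =>
  -(2 / β k) * (if j = k then 1 else 0) + (2 / (n : ℝ)) * ((Aᵀ * A).mulVec β j)

theorem rowLossGrad_dotProduct (β v : κ → ℝ) :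
    rowLossGrad A k β ⬝ᵥ v = -(2 / β k) * v k + (2 / (n : ℝ)) * (A *ᵥ β ⬝ᵥ A *ᵥ v) := by
  rw [← transpose_mul_self_mulVec_dotProduct]
  simp [rowLossGrad, dotProduct, add_mul, sum_add_distrib, mul_sum, mul_assoc]

variable {A k}

theorem hasDerivAt_rowLoss_add_smul {β : κ → ℝ} (hβ : β k ≠ 0) (v : κ → ℝ) :
    HasDerivAt (fun t : ℝ => rowLoss A k (β + t • v)) (rowLossGrad A k β ⬝ᵥ v) 0 := by
  have hline : ∀ a b : ℝ, HasDerivAt (fun t : ℝ => a + t * b) b 0 := fun a b => by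
    simpa using ((hasDerivAt_id (0 : ℝ)).mul_const b).const_add a
  have hlog : HasDerivAt (fun t : ℝ => -2 * Real.log (β k + t * v k)) (-(2 / β k) * v k) 0 := by
    refine (((hline (β k) (v k)).log (by simpa using hβ)).const_mul (-2)).congr_deriv ?_
    simp only [zero_mul, add_zero]
    ring
  have hsq : HasDerivAt (fun t : ℝ => (1 / (n : ℝ)) * ∑ i, ((A *ᵥ β) i + t * (A *ᵥ v) i) ^ 2)
      ((2 / (n : ℝ)) * (A *ᵥ β ⬝ᵥ A *ᵥ v)) 0 := by
    refine ((HasDerivAt.fun_sum (u := Finset.univ) fun i _ =>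
      (hline ((A *ᵥ β) i) ((A *ᵥ v) i)).pow 2).const_mul (1 / (n : ℝ))).congr_deriv ?_
    simp only [zero_mul, add_zero, dotProduct, mul_sum]
    refine sum_congr rfl fun i _ => ?_
    norm_num
    ring
  have hfun : (fun t : ℝ => rowLoss A k (β + t • v)) = fun t =>
      -2 * Real.log (β k + t * v k) + (1 / (n : ℝ)) * ∑ i, ((A *ᵥ β) i + t * (A *ᵥ v) i) ^ 2 := by
    funext t
    simp [rowLoss, mulVec_add, mulVec_smul]
  rw [hfun, rowLossGrad_dotProduct]
  exact hlog.add hsq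

theorem rowLoss_add_dotProduct_le {β γ : κ → ℝ} (hβ : 0 < β k) (hγ : 0 < γ k) :
    rowLoss A k β + rowLossGrad A k β ⬝ᵥ (γ - β) ≤ rowLoss A k γ := by
  have hlog : Real.log (γ k) ≤ Real.log (β k) + (γ k - β k) / β k := by
    have := Real.log_le_sub_one_of_pos (div_pos hγ hβ)
    rw [Real.log_div hγ.ne' hβ.ne'] at this
    rw [sub_div, div_self hβ.ne']
    linarith
  have hsq : ∑ i, (A *ᵥ β) i ^ 2 + 2 * (A *ᵥ β ⬝ᵥ A *ᵥ (γ - β)) ≤ ∑ i, (A *ᵥ γ) i ^ 2 := by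
    have : ∑ i, (A *ᵥ γ) i ^ 2 - (∑ i, (A *ᵥ β) i ^ 2 + 2 * (A *ᵥ β ⬝ᵥ A *ᵥ (γ - β)))
        = ∑ i, ((A *ᵥ γ) i - (A *ᵥ β) i) ^ 2 := by
      simp only [dotProduct, mulVec_sub, Pi.sub_apply, mul_sum, ← sum_add_distrib,
        ← sum_sub_distrib]
      exact sum_congr rfl fun i _ => by ring
    linarith [sum_nonneg fun i (_ : i ∈ Finset.univ) => sq_nonneg ((A *ᵥ γ) i - (A *ᵥ β) i)]
  rw [rowLossGrad_dotProduct]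
  simp only [rowLoss, Pi.sub_apply]
  have hn : (0 : ℝ) ≤ 1 / n := by positivity
  have h1 : -(2 / β k) * (γ k - β k) = -2 * ((γ k - β k) / β k) := by ring
  have h2 : 2 / (n : ℝ) * (A *ᵥ β ⬝ᵥ A *ᵥ (γ - β)) = 1 / n * (2 * (A *ᵥ β ⬝ᵥ A *ᵥ (γ - β))) := by
    ring
  have := mul_le_mul_of_nonneg_left hsq hn
  rw [mul_add] at this
  linarith

end RowLoss

section GroupDual

variable {κ ι : Type*} [Fintype κ] [DecidableEq κ] {p : ι → κ → Prop} [∀ i, DecidablePred (p i)]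
  {ω : ι → κ → ℝ} {s : Finset ι} {G β : κ → ℝ} {lam : ℝ}

theorem exists_groupOp_subgradient_iff (hω : ∀ i ∈ s, ∀ m, p i m → ω i m ≠ 0) :
    (∃ a : ι → EuclideanSpace ℝ κ,
      WithLp.toLp 2 G + lam • ∑ i ∈ s, adjoint (groupOp (p i) (ω i)) (a i) = 0 ∧
      (∀ i ∈ s, groupOp (p i) (ω i) (WithLp.toLp 2 β) ≠ 0 →
        a i = ‖groupOp (p i) (ω i) (WithLp.toLp 2 β)‖⁻¹ • groupOp (p i) (ω i) (WithLp.toLp 2 β)) ∧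
      (∀ i ∈ s, groupOp (p i) (ω i) (WithLp.toLp 2 β) = 0 → ‖a i‖ ≤ 1)) ↔
    ∃ a : ι → κ → ℝ,
      (∀ j, G j + lam * ∑ i ∈ s, (if p i j then ω i j else 0) * a i j = 0) ∧
      (∀ i ∈ s, ∀ m, ¬p i m → a i m = 0) ∧
      (∀ i ∈ s, (¬∀ m, p i m → β m = 0) → ∀ m, p i m →
        a i m = ω i m * β m / √(∑ m' ∈ univ.filter (p i), (ω i m' * β m') ^ 2)) ∧
      (∀ i ∈ s, (∀ m, p i m → β m = 0) → √(∑ m ∈ univ.filter (p i), a i m ^ 2) ≤ 1) := by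
  have hzero : ∀ i ∈ s, groupOp (p i) (ω i) (WithLp.toLp 2 β) = 0 ↔ ∀ m, p i m → β m = 0 :=
    fun i hi => groupOp_eq_zero_iff (hω i hi)
  constructor
  · rintro ⟨a, hstat, halign, hbound⟩
    refine ⟨fun i m => if p i m then a i m else 0, fun j => ?_, fun i _ m hm => if_neg hm,
      fun i hi hβ m hm => ?_, fun i hi hβ => ?_⟩
    · have hj := congrArg (· j) hstat
      simp only [toLp_add_smul_sum_adjoint_groupOp_apply, WithLp.ofLp_zero, Pi.zero_apply] at hj
      refine Eq.trans ?_ hj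
      congr 2
      refine sum_congr rfl fun i _ => ?_
      by_cases h : p i j <;> simp [h]
    · change (if p i m then a i m else 0) = _
      rw [if_pos hm, halign i hi (mt (hzero i hi).1 hβ), inv_norm_smul_groupOp_apply, if_pos hm]
    · calc √(∑ m ∈ univ.filter (p i), (if p i m then a i m else 0) ^ 2)
          = √(∑ m ∈ univ.filter (p i), a i m ^ 2) :=
            congrArg _ (sum_congr rfl fun m hm => by rw [if_pos (mem_filter.1 hm).2])
        _ ≤ ‖a i‖ := sqrt_sum_filter_sq_le_norm _
        _ ≤ 1 := hbound i hi ((hzero i hi).2 hβ)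
  · rintro ⟨a, hstat, hsupp, halign, hbound⟩
    refine ⟨fun i => WithLp.toLp 2 (a i), ?_, fun i hi hβ => ?_, fun i hi hβ => ?_⟩
    · ext j
      rw [toLp_add_smul_sum_adjoint_groupOp_apply]
      exact hstat j
    · ext m
      rw [inv_norm_smul_groupOp_apply]
      split_ifs with hm
      · exact halign i hi (mt (hzero i hi).2 hβ) m hm
      · exact hsupp i hi m hm
    · rw [norm_eq_sqrt_sum_filter_sq (p := p i) (hsupp i hi)]
      exact hbound i hi ((hzero i hi).1 hβ)

end GroupDual

/-- optimality conditions, Lemma `theory:opt_cond`: `β̂` with `β̂_r > 0`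
minimizes the `r`-th row subproblem iff there are dual vectors `a^{(ℓ)}` satisfying the
stationarity equation and the (sub)gradient conditions of the hierarchical group lasso
penalty.  Coordinates of `ℝ^r` are 0-based; the `r`-th coordinate is `⟨r−1,·⟩`; group
`ℓ ∈ {0,…,r−2}` is `{m : (m:ℕ) ≤ ℓ}` with weight vector `W^{(ℓ)}` supported there. -/
theorem stmt_7 (n r : ℕ) (hr2 : 2 ≤ r) (lam : ℝ) (hlam : 0 < lam)
    (w : ℕ → ℕ → ℝ) (hw : ∀ ℓ m : ℕ, m ≤ ℓ → ℓ < r - 1 → 0 < w ℓ m)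
    (Xr : Matrix (Fin n) (Fin r) ℝ)
    (F : (Fin r → ℝ) → ℝ)
    (hF : ∀ β : Fin r → ℝ,
      F β = -2 * Real.log (β ⟨r - 1, by omega⟩)
        + (1 / (n : ℝ)) * ∑ i : Fin n, (Xr.mulVec β i) ^ 2
        + lam * ∑ ℓ ∈ Finset.range (r - 1),
            Real.sqrt (∑ m ∈ Finset.univ.filter (fun m : Fin r => (m : ℕ) ≤ ℓ),
              w ℓ (m : ℕ) ^ 2 * β m ^ 2))
    (βh : Fin r → ℝ) (hβpos : 0 < βh ⟨r - 1, by omega⟩) :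
    (∀ β : Fin r → ℝ, 0 < β ⟨r - 1, by omega⟩ → F βh ≤ F β) ↔
    ∃ a : ℕ → Fin r → ℝ,
      (∀ j : Fin r,
        -(2 / βh ⟨r - 1, by omega⟩) * (if j = (⟨r - 1, by omega⟩ : Fin r) then 1 else 0)
          + (2 / (n : ℝ)) * ((Xrᵀ * Xr).mulVec βh j)
          + lam * ∑ ℓ ∈ Finset.range (r - 1),
              (if (j : ℕ) ≤ ℓ then w ℓ (j : ℕ) else 0) * a ℓ j = 0) ∧
      (∀ ℓ, ℓ < r - 1 → ∀ m : Fin r, ℓ < (m : ℕ) → a ℓ m = 0) ∧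
      (∀ ℓ, ℓ < r - 1 → (¬ ∀ m : Fin r, (m : ℕ) ≤ ℓ → βh m = 0) →
        ∀ m : Fin r, (m : ℕ) ≤ ℓ →
          a ℓ m = w ℓ (m : ℕ) * βh m /
            Real.sqrt (∑ m' ∈ Finset.univ.filter (fun m' : Fin r => (m' : ℕ) ≤ ℓ),
              (w ℓ (m' : ℕ) * βh m') ^ 2)) ∧
      (∀ ℓ, ℓ < r - 1 → (∀ m : Fin r, (m : ℕ) ≤ ℓ → βh m = 0) →
        Real.sqrt (∑ m ∈ Finset.univ.filter (fun m : Fin r => (m : ℕ) ≤ ℓ),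
          a ℓ m ^ 2) ≤ 1) := by
  let k : Fin r := ⟨r - 1, by omega⟩
  let D : ℕ → EuclideanSpace ℝ (Fin r) →L[ℝ] EuclideanSpace ℝ (Fin r) :=
    fun ℓ => groupOp (fun m : Fin r => (m : ℕ) ≤ ℓ) fun m => w ℓ m
  let U : Set (EuclideanSpace ℝ (Fin r)) := {y | 0 < y k}
  have hFD : ∀ β, F β = rowLoss Xr k β + lam * ∑ ℓ ∈ range (r - 1), ‖D ℓ (WithLp.toLp 2 β)‖ := by
    intro β
    simp only [hF, D, norm_groupOp, mul_pow]
    rfl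
  have hmin : (∀ β : Fin r → ℝ, 0 < β k → F βh ≤ F β) ↔
      IsMinOn (fun y => rowLoss Xr k (WithLp.ofLp y) + lam * ∑ ℓ ∈ range (r - 1), ‖D ℓ y‖) U
        (WithLp.toLp 2 βh) := by
    refine ⟨fun h y hy => ?_, fun h β hβ => ?_⟩
    · simpa [hFD] using h (WithLp.ofLp y) hy
    · simpa [hFD] using h (show WithLp.toLp 2 β ∈ U from hβ)
  have hU : U ∈ 𝓝 (WithLp.toLp 2 βh) := (isOpen_lt continuous_const (by fun_prop)).mem_nhds hβpos
  have hfg : ∀ v, HasDerivAt (fun t : ℝ => rowLoss Xr k (WithLp.ofLp (WithLp.toLp 2 βh + t • v)))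
      ⟪WithLp.toLp 2 (rowLossGrad Xr k βh), v⟫ 0 := fun v => by
    simpa [real_inner_toLp_left] using hasDerivAt_rowLoss_add_smul hβpos.ne' (WithLp.ofLp v)
  have hf : ∀ y ∈ U, rowLoss Xr k βh + ⟪WithLp.toLp 2 (rowLossGrad Xr k βh), y - WithLp.toLp 2 βh⟫
      ≤ rowLoss Xr k (WithLp.ofLp y) :=
    fun y hy => by simpa [real_inner_toLp_left] using rowLoss_add_dotProduct_le hβpos hy
  have hwD : ∀ ℓ ∈ range (r - 1), ∀ m : Fin r, (m : ℕ) ≤ ℓ → w ℓ m ≠ 0 :=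
    fun ℓ hℓ m hm => (hw ℓ m hm (mem_range.1 hℓ)).ne'
  refine hmin.trans <| (isMinOn_add_sum_norm_iff hlam hU hfg hf).trans <|
    (exists_groupOp_subgradient_iff hwD).trans ?_
  simp only [mem_range, not_le]
  rfl
end

section
/- Let L be a p×p lower-triangular real matrix with strictly positive diagonal entries, let Σ = (LᵀL)^{−1}, and fix r ∈ {2,…,p}. Suppose L has bandwidth K_r ≥ 1 at row r, i.e., L_{rj} = 0 for all 1 ≤ j < r − K_r, and let I_r = {r−K_r,…,r−1}. Then the Schur complement identity Σ_{rr} − Σ_{r I_r}·(Σ_{I_r I_r})^{−1}·Σ_{I_r r} = 1/L_{rr}² holds; i.e., the conditional variance of the r-th coordinate given the coordinates in I_r under the N(0,Σ) distribution equals L_{rr}^{−2}. -/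
/-!
Write `ρ` for row `r`. Since `Σ = L⁻¹ (Lᵀ)⁻¹`, we have `L Σ = (Lᵀ)⁻¹`, which is upper triangular
with diagonal `1 / L_{ii}`. By the band condition row `ρ` of `L` is supported on `I_r ∪ {ρ}`, so
row `ρ` of `L Σ` reads `b Σ_{I_r ·} + L_{ρρ} Σ_{ρ ·}` with `b = L_{ρ I_r}`. On the columns `I_r`
this vanishes, so `Σ_{ρ I_r} (Σ_{I_r I_r})⁻¹ = -b / L_{ρρ}` is the regression coefficient; in
column `ρ` it equals `1 / L_{ρρ}`, and the Schur complement collapses to `1 / L_{ρρ}²`.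
-/

open Matrix

namespace Matrix

variable {K : Type*} [Field K]

theorem isUnit_det_of_isLowerTriangular {m : Type*} [Fintype m] [DecidableEq m] [LinearOrder m]
    {M : Matrix m m K} (hM : M.IsLowerTriangular) (hdiag : ∀ i, M i i ≠ 0) : IsUnit M.det := by
  rw [det_of_isLowerTriangular M hM]
  exact (Finset.prod_ne_zero_iff.2 fun i _ => hdiag i).isUnit

theorem IsUpperTriangular.inv_apply_self_mul_apply_self {m : Type*} [Fintype m] [DecidableEq m]
    [LinearOrder m] {U : Matrix m m K} (hU : U.IsUpperTriangular) (hdet : IsUnit U.det) (i : m) :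
    U⁻¹ i i * U i i = 1 := by
  have := U.invertibleOfIsUnitDet hdet
  have hinv : U⁻¹.IsUpperTriangular := blockTriangular_inv_of_blockTriangular hU
  have h := congrFun (congrFun (nonsing_inv_mul U hdet) i) i
  rw [mul_apply, Finset.sum_eq_single i] at h
  · simpa using h
  · intro k _ hki
    rcases lt_or_gt_of_ne hki with hk | hk
    · rw [hinv hk, zero_mul]
    · rw [hU hk, mul_zero]
  · simp

theorem mul_inv_transpose_mul_self {n : Type*} [Fintype n] [DecidableEq n] {L : Matrix n n K}
    (hL : IsUnit L.det) : L * (Lᵀ * L)⁻¹ = (Lᵀ)⁻¹ := by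
  rw [Matrix.mul_inv_rev, ← Matrix.mul_assoc, mul_nonsing_inv L hL, Matrix.one_mul]

theorem mul_apply_eq_sum_add_of_row_support {ι m n o : Type*} [Fintype ι] [Fintype n]
    [DecidableEq n] {A : Matrix m n K} (B : Matrix n o K) {e : ι → n}
    (he : Function.Injective e) {i : m} {k : n} (hk : k ∉ Set.range e)
    (hA : ∀ j, j ≠ k → j ∉ Set.range e → A i j = 0) (j : o) :
    (A * B) i j = ∑ l, A i (e l) * B (e l) j + A i k * B k j := by
  have hk' : k ∉ Finset.univ.map ⟨e, he⟩ := by simpa using hk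
  rw [mul_apply, ← Finset.sum_subset (Finset.subset_univ (Finset.cons k _ hk')),
    Finset.sum_cons, Finset.sum_map, add_comm]
  · rfl
  · intro j _ hj
    simp only [Finset.mem_cons, Finset.mem_map, Finset.mem_univ, true_and, not_or] at hj
    rw [hA j hj.1 (by simpa using hj.2), zero_mul]

theorem sub_dotProduct_vecMul_inv_eq_one_div_sq {ι : Type*} [Fintype ι] [DecidableEq ι]
    {A : Matrix ι ι K} (hA : IsUnit A.det) {u w b : ι → K} {s a : K} (ha : a ≠ 0)
    (hu : b ᵥ* A + a • u = 0) (hw : b ⬝ᵥ w + a * s = a⁻¹) :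
    s - u ᵥ* A⁻¹ ⬝ᵥ w = 1 / a ^ 2 := by
  have hu' : u = (-a⁻¹ • b) ᵥ* A := by
    rw [smul_vecMul, neg_smul, ← smul_neg, ← eq_neg_of_add_eq_zero_right hu, inv_smul_smul₀ ha]
  rw [hu', vecMul_vecMul, mul_nonsing_inv A hA, vecMul_one, smul_dotProduct,
    eq_sub_of_add_eq hw, smul_eq_mul]
  linear_combination (-s) * inv_mul_cancel₀ ha

theorem PosDef.inv_transpose_mul_self {n : Type*} [Fintype n] [DecidableEq n]
    {L : Matrix n n ℝ} (hL : IsUnit L.det) : ((Lᵀ * L)⁻¹).PosDef := by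
  rw [← conjTranspose_eq_transpose_of_trivial]
  exact (PosDef.conjTranspose_mul_self L
    (mulVec_injective_iff_isUnit.2 ((isUnit_iff_isUnit_det L).2 hL))).inv

end Matrix

namespace Fin

variable {p K a : ℕ} {e : Fin K → Fin p}

theorem injective_of_val_eq_add (he : ∀ i, (e i : ℕ) = a + i) : Function.Injective e :=
  fun i j h => Fin.ext (by have := congrArg Fin.val h; rw [he, he] at this; omega)

theorem mem_range_iff_of_val_eq_add (he : ∀ i, (e i : ℕ) = a + i) (j : Fin p) :
    j ∈ Set.range e ↔ a ≤ j ∧ (j : ℕ) < a + K := by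
  constructor
  · rintro ⟨i, rfl⟩
    have := he i
    omega
  · rintro ⟨hle, hlt⟩
    exact ⟨⟨j - a, by omega⟩, Fin.ext (by rw [he]; simp only; omega)⟩

end Fin

/-- Let `L` be lower triangular with positive diagonal, `Σ = (LᵀL)⁻¹`, and
fix a (1-based) row index `r ∈ {2,…,p}` with bandwidth `K_r ≥ 1`, i.e. `L_{rj} = 0` for
`1 ≤ j < r − K_r` (0-based: `L ⟨r-1⟩ j = 0` for `j + K + 1 < r`).  With
`I_r = {r−K,…,r−1}` (0-based embedding `e i = r−1−K+i`), the Schur complement identity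
`Σ_{rr} − Σ_{r I_r} (Σ_{I_r I_r})⁻¹ Σ_{I_r r} = 1/L_{rr}²` holds. -/
theorem stmt_19 (p : ℕ) (L : Matrix (Fin p) (Fin p) ℝ)
    (hLtri : ∀ i j : Fin p, i < j → L i j = 0)
    (hLdiag : ∀ i : Fin p, 0 < L i i)
    (r K : ℕ) (hr2 : 2 ≤ r) (hrp : r ≤ p) (hKr : K ≤ r - 1)
    (Sig : Matrix (Fin p) (Fin p) ℝ) (hSig : Sig = (Lᵀ * L)⁻¹)
    (e : Fin K → Fin p)
    (he : ∀ i : Fin K, (e i : ℕ) = r - 1 - K + (i : ℕ))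
    (hband : ∀ j : Fin p, (j : ℕ) + K + 1 < r → L ⟨r - 1, by omega⟩ j = 0) :
    Sig ⟨r - 1, by omega⟩ ⟨r - 1, by omega⟩
      - dotProduct
          (Matrix.vecMul (fun i : Fin K => Sig ⟨r - 1, by omega⟩ (e i))
            (Sig.submatrix e e)⁻¹)
          (fun i : Fin K => Sig (e i) ⟨r - 1, by omega⟩)
      = 1 / (L ⟨r - 1, by omega⟩ ⟨r - 1, by omega⟩) ^ 2 := by
  set ρ : Fin p := ⟨r - 1, by omega⟩
  have hρval : (ρ : ℕ) = r - 1 := rfl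
  have he_inj := Fin.injective_of_val_eq_add he
  have he_lt (i : Fin K) : e i < ρ := by rw [Fin.lt_def, hρval, he]; omega
  have hρ : ρ ∉ Set.range e := fun ⟨i, hi⟩ => (he_lt i).ne hi
  have hsupp (j : Fin p) (hjρ : j ≠ ρ) (hj : j ∉ Set.range e) : L ρ j = 0 := by
    rw [Fin.mem_range_iff_of_val_eq_add he] at hj
    rcases lt_or_gt_of_ne hjρ with hlt | hgt
    · exact hband j (by rw [Fin.lt_def, hρval] at hlt; omega)
    · exact hLtri ρ j hgt
  have hL : IsUnit L.det := isUnit_det_of_isLowerTriangular hLtri fun i => (hLdiag i).ne'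
  have hLt : Lᵀ.IsUpperTriangular := fun i j h => hLtri j i h
  have hLt_det : IsUnit Lᵀ.det := by rwa [det_transpose]
  have := Lᵀ.invertibleOfIsUnitDet hLt_det
  have hrow (j : Fin p) : ∑ l, L ρ (e l) * Sig (e l) j + L ρ ρ * Sig ρ j = (Lᵀ)⁻¹ ρ j := by
    rw [← mul_inv_transpose_mul_self hL, ← hSig,
      mul_apply_eq_sum_add_of_row_support Sig he_inj hρ hsupp]
  have hSigI : IsUnit (Sig.submatrix e e).det :=
    ((hSig ▸ PosDef.inv_transpose_mul_self hL).submatrix he_inj).det_pos.ne'.isUnit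
  refine sub_dotProduct_vecMul_inv_eq_one_div_sq hSigI (hLdiag ρ).ne'
    (b := fun l => L ρ (e l)) ?_ ?_
  · funext m
    have hzero : (Lᵀ)⁻¹ ρ (e m) = 0 := blockTriangular_inv_of_blockTriangular hLt (he_lt m)
    simpa [vecMul, dotProduct, hzero] using hrow (e m)
  · have hdiag : (Lᵀ)⁻¹ ρ ρ = (L ρ ρ)⁻¹ :=
      eq_inv_of_mul_eq_one_left (hLt.inv_apply_self_mul_apply_self hLt_det ρ)
    rw [← hdiag]
    exact hrow ρ
end
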